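/- arXiv:2412.14120 — 6 statements merged into one kernel-verified Lean document; each statement's English description precedes it below -/
import Mathlib

section
/- For all integers k ≥ 0, ℓ ≥ 2 and j ≥ 2, the rational number B(k,ℓ,j) = j·(j−1)·(k+ℓ−2)!·(k+ℓ+j−2)!·(k+ℓ+j−3)! / (k!·(k+j)!·(k+j−1)!·ℓ!·(ℓ−1)!·(ℓ−2)!) is a nonnegative integer; equivalently, k!·(k+j)!·(k+j−1)!·ℓ!·(ℓ−1)!·(ℓ−2)! divides j·(j−1)·(k+ℓ−2)!·(k+ℓ+j−2)!·(k+ℓ+j−3)!. -/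
/-- `B k l j` is the number of bipolar oriented planar maps with `k` internal vertices,
`l` internal faces, and an external face of degree `j` (for `k ≥ 0`, `l ≥ 2`, `j ≥ 2`). -/
def B (k l j : ℕ) : ℚ :=
  (j * (j - 1) * Nat.factorial (k + l - 2) * Nat.factorial (k + l + j - 2) *
      Nat.factorial (k + l + j - 3) : ℚ) /
    (Nat.factorial k * Nat.factorial (k + j) * Nat.factorial (k + j - 1) *
      Nat.factorial l * Nat.factorial (l - 1) * Nat.factorial (l - 2) : ℚ)

/-- The LGV determinant counting the bipolar maps: rows `(k, k+J+1, k+J+2)`,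
columns `(L, L+1, L+2)`, entries `C(a+b, a)`. -/
def Dd (k L J : ℕ) : ℤ :=
  (Nat.choose (k + L) k * Nat.choose (k + J + 1 + (L + 1)) (k + J + 1) *
      Nat.choose (k + J + 2 + (L + 2)) (k + J + 2) : ℤ)
  - (Nat.choose (k + L) k * Nat.choose (k + J + 1 + (L + 2)) (k + J + 1) *
      Nat.choose (k + J + 2 + (L + 1)) (k + J + 2) : ℤ)
  - (Nat.choose (k + (L + 1)) k * Nat.choose (k + J + 1 + L) (k + J + 1) *
      Nat.choose (k + J + 2 + (L + 2)) (k + J + 2) : ℤ)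
  + (Nat.choose (k + (L + 1)) k * Nat.choose (k + J + 1 + (L + 2)) (k + J + 1) *
      Nat.choose (k + J + 2 + L) (k + J + 2) : ℤ)
  + (Nat.choose (k + (L + 2)) k * Nat.choose (k + J + 1 + L) (k + J + 1) *
      Nat.choose (k + J + 2 + (L + 1)) (k + J + 2) : ℤ)
  - (Nat.choose (k + (L + 2)) k * Nat.choose (k + J + 1 + (L + 1)) (k + J + 1) *
      Nat.choose (k + J + 2 + L) (k + J + 2) : ℤ)

lemma key (k L J : ℕ) :
    ((Nat.factorial k : ℚ) * Nat.factorial (k + J + 2) * Nat.factorial (k + J + 1) *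
        Nat.factorial (L + 2) * Nat.factorial (L + 1) * Nat.factorial L) * (Dd k L J : ℚ)
    = (J + 2) * (J + 1) * Nat.factorial (k + L) * Nat.factorial (k + L + J + 2) *
        Nat.factorial (k + L + J + 1) := by
  have ch : ∀ a b : ℕ, ((Nat.choose (a + b) a : ℕ) : ℚ)
      = Nat.factorial (a + b) / (Nat.factorial a * Nat.factorial b) := by
    intro a b
    rw [Nat.cast_choose ℚ (Nat.le_add_right a b), Nat.add_sub_cancel_left]
  have fs : ∀ n : ℕ, ((Nat.factorial (n + 1) : ℕ) : ℚ) = (n + 1) * Nat.factorial n := by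
    intro n; rw [Nat.factorial_succ]; push_cast; ring
  have f1 : ((Nat.factorial (k + (L + 1)) : ℕ) : ℚ)
      = (k + L + 1) * Nat.factorial (k + L) := by
    rw [show k + (L + 1) = (k + L) + 1 by ring, fs]; push_cast; ring
  have f2 : ((Nat.factorial (k + (L + 2)) : ℕ) : ℚ)
      = (k + L + 2) * ((k + L + 1) * Nat.factorial (k + L)) := by
    rw [show k + (L + 2) = ((k + L) + 1) + 1 by ring, fs, fs]; push_cast; ring
  have g0 : Nat.factorial (k + J + 1 + L) = Nat.factorial (k + L + J + 1) := by
    rw [show k + J + 1 + L = k + L + J + 1 by ring]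
  have g1 : ((Nat.factorial (k + J + 1 + (L + 1)) : ℕ) : ℚ)
      = (k + L + J + 2) * Nat.factorial (k + L + J + 1) := by
    rw [show k + J + 1 + (L + 1) = (k + L + J + 1) + 1 by ring, fs]; push_cast; ring
  have g2 : ((Nat.factorial (k + J + 1 + (L + 2)) : ℕ) : ℚ)
      = (k + L + J + 3) * ((k + L + J + 2) * Nat.factorial (k + L + J + 1)) := by
    rw [show k + J + 1 + (L + 2) = ((k + L + J + 1) + 1) + 1 by ring, fs, fs]
    push_cast; ring
  have h0 : ((Nat.factorial (k + J + 2 + L) : ℕ) : ℚ)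
      = (k + L + J + 2) * Nat.factorial (k + L + J + 1) := by
    rw [show k + J + 2 + L = (k + L + J + 1) + 1 by ring, fs]; push_cast; ring
  have h1 : ((Nat.factorial (k + J + 2 + (L + 1)) : ℕ) : ℚ)
      = (k + L + J + 3) * ((k + L + J + 2) * Nat.factorial (k + L + J + 1)) := by
    rw [show k + J + 2 + (L + 1) = ((k + L + J + 1) + 1) + 1 by ring, fs, fs]
    push_cast; ring
  have h2 : ((Nat.factorial (k + J + 2 + (L + 2)) : ℕ) : ℚ)
      = (k + L + J + 4) * ((k + L + J + 3) * ((k + L + J + 2) *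
          Nat.factorial (k + L + J + 1))) := by
    rw [show k + J + 2 + (L + 2) = (((k + L + J + 1) + 1) + 1) + 1 by ring, fs, fs, fs]
    push_cast; ring
  have hr : ((Nat.factorial (k + L + J + 2) : ℕ) : ℚ)
      = (k + L + J + 2) * Nat.factorial (k + L + J + 1) := by
    rw [show k + L + J + 2 = (k + L + J + 1) + 1 by ring, fs]; push_cast; ring
  have nz : ∀ n : ℕ, ((Nat.factorial n : ℕ) : ℚ) ≠ 0 := fun n =>
    Nat.cast_ne_zero.mpr (Nat.factorial_ne_zero n)
  unfold Dd
  push_cast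
  rw [ch k L, ch k (L + 1), ch k (L + 2), ch (k + J + 1) L, ch (k + J + 1) (L + 1),
    ch (k + J + 1) (L + 2), ch (k + J + 2) L, ch (k + J + 2) (L + 1), ch (k + J + 2) (L + 2)]
  rw [f1, f2, g0, g1, g2, h0, h1, h2, hr]
  field_simp
  ring

theorem B_is_integer (k l j : ℕ) (hl : 2 ≤ l) (hj : 2 ≤ j) :
    (∃ n : ℕ, B k l j = n) ∧
      Nat.factorial k * Nat.factorial (k + j) * Nat.factorial (k + j - 1) *
          Nat.factorial l * Nat.factorial (l - 1) * Nat.factorial (l - 2) ∣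
        j * (j - 1) * Nat.factorial (k + l - 2) * Nat.factorial (k + l + j - 2) *
          Nat.factorial (k + l + j - 3) := by
  obtain ⟨L, rfl⟩ : ∃ L, l = L + 2 := ⟨l - 2, by omega⟩
  obtain ⟨J, rfl⟩ : ∃ J, j = J + 2 := ⟨j - 2, by omega⟩
  have e1 : k + (L + 2) - 2 = k + L := by omega
  have e2 : k + (L + 2) + (J + 2) - 2 = k + L + J + 2 := by omega
  have e3 : k + (L + 2) + (J + 2) - 3 = k + L + J + 1 := by omega
  have e4 : k + (J + 2) = k + J + 2 := by omega
  have e5 : k + J + 2 - 1 = k + J + 1 := by omega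
  have e6 : L + 2 - 1 = L + 1 := by omega
  have e7 : L + 2 - 2 = L := by omega
  have e8 : J + 2 - 1 = J + 1 := by omega
  have hkey := key k L J
  have hden : ((Nat.factorial k : ℚ) * Nat.factorial (k + J + 2) * Nat.factorial (k + J + 1) *
      Nat.factorial (L + 2) * Nat.factorial (L + 1) * Nat.factorial L) ≠ 0 := by
    positivity
  have hdpos : (0 : ℚ) < (Nat.factorial k : ℚ) * Nat.factorial (k + J + 2) *
      Nat.factorial (k + J + 1) * Nat.factorial (L + 2) * Nat.factorial (L + 1) *
      Nat.factorial L := by positivity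
  have hnum : (0 : ℚ) ≤ ((J : ℚ) + 2) * ((J : ℚ) + 1) * Nat.factorial (k + L) *
      Nat.factorial (k + L + J + 2) * Nat.factorial (k + L + J + 1) := by positivity
  have hB : B k (L + 2) (J + 2) = (Dd k L J : ℚ) := by
    rw [B, e1, e2, e3, e4, e5, e6, e7]
    rw [eq_comm, eq_div_iff hden]
    rw [mul_comm ((Dd k L J : ℚ)) _, hkey]
    push_cast
    ring
  have hnn : (0 : ℤ) ≤ Dd k L J := by
    by_contra h
    push_neg at h
    have h' : ((Dd k L J : ℚ)) < 0 := by exact_mod_cast h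
    nlinarith [hkey, hdpos, hnum]
  constructor
  · refine ⟨(Dd k L J).toNat, ?_⟩
    rw [hB]
    exact_mod_cast (Int.toNat_of_nonneg hnn).symm
  · rw [e1, e2, e3, e4, e5, e6, e7, e8]
    have hZ : ((Nat.factorial k * Nat.factorial (k + J + 2) * Nat.factorial (k + J + 1) *
        Nat.factorial (L + 2) * Nat.factorial (L + 1) * Nat.factorial L : ℕ) : ℤ) ∣
        (((J + 2) * (J + 1) * Nat.factorial (k + L) * Nat.factorial (k + L + J + 2) *
          Nat.factorial (k + L + J + 1) : ℕ) : ℤ) := by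
      refine ⟨Dd k L J, ?_⟩
      have h2 : ((Nat.factorial k * Nat.factorial (k + J + 2) * Nat.factorial (k + J + 1) *
          Nat.factorial (L + 2) * Nat.factorial (L + 1) * Nat.factorial L : ℕ) : ℚ) *
          (Dd k L J : ℚ) = (((J + 2) * (J + 1) * Nat.factorial (k + L) *
          Nat.factorial (k + L + J + 2) * Nat.factorial (k + L + J + 1) : ℕ) : ℚ) := by
        push_cast
        push_cast at hkey
        linarith [hkey]
      exact_mod_cast h2.symm
    exact_mod_cast hZ
end

section
/- For all integers k ≥ 0 and j ≥ 3, the rational number S(k,j) = j·(j−1)·(j−2)·(2k+2j−4)!·(2k+j−3)! / (k!·(k+j)!·(k+j−1)!·(k+j−2)!) is a nonnegative integer; equivalently, k!·(k+j)!·(k+j−1)!·(k+j−2)! divides j·(j−1)·(j−2)·(2k+2j−4)!·(2k+j−3)!. -/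
/-- `S k j` is the number of Schnyder woods on `k + j + 1` vertices whose external
vertex `ρ₁` has degree `j` (for `k ≥ 0`, `j ≥ 3`). -/
def S (k j : ℕ) : ℚ :=
  (j * (j - 1) * (j - 2) * Nat.factorial (2 * k + 2 * j - 4) *
      Nat.factorial (2 * k + j - 3) : ℚ) /
    (Nat.factorial k * Nat.factorial (k + j) * Nat.factorial (k + j - 1) *
      Nat.factorial (k + j - 2) : ℚ)


open Nat

lemma fact_step (n r : ℕ) (h : n = r + 1) : ((n)! : ℚ) = ((r : ℚ) + 1) * (r ! : ℚ) := by
  subst h; rw [Nat.factorial_succ]; push_cast; ring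




set_option maxHeartbeats 1000000 in
lemma key2 (t m : ℕ) :
    ((t+2)! : ℚ) * ((t+m+5)! : ℚ) * ((t+m+4)! : ℚ) * ((t+m+3)! : ℚ) *
      ((((2*t+2*m+5).choose (t+m+2) : ℚ) - ((2*t+2*m+5).choose (t+m+4) : ℚ)) *
       (((2*t+m+6).choose (t+2) : ℚ) - ((2*t+m+6).choose (t+m+5) : ℚ)) -
       (((2*t+2*m+7).choose (t+m+3) : ℚ) - ((2*t+2*m+7).choose (t+m+5) : ℚ)) *
       (((2*t+m+4).choose (t+m+3) : ℚ) - ((2*t+m+4).choose (t+m+4) : ℚ))) =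
    ((m:ℚ)+3) * ((m:ℚ)+2) * ((m:ℚ)+1) * ((2*t+2*m+6)! : ℚ) * ((2*t+m+4)! : ℚ) := by
  have hb1 : (t ! : ℚ) ≠ 0 := by positivity
  have hb2 : (((t+m+1) !) : ℚ) ≠ 0 := by positivity
  have hs1 : ((t:ℕ):ℚ) + 1 ≠ 0 := by positivity
  have hs2 : ((t+1:ℕ):ℚ) + 1 ≠ 0 := by positivity
  have hs3 : ((t+m+1:ℕ):ℚ) + 1 ≠ 0 := by positivity
  have hs4 : ((t+m+2:ℕ):ℚ) + 1 ≠ 0 := by positivity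
  have hs5 : ((t+m+3:ℕ):ℚ) + 1 ≠ 0 := by positivity
  have hs6 : ((t+m+4:ℕ):ℚ) + 1 ≠ 0 := by positivity
  have hs7 : ((2*t+m+4:ℕ):ℚ) + 1 ≠ 0 := by positivity
  have hs8 : ((2*t+m+5:ℕ):ℚ) + 1 ≠ 0 := by positivity
  have hs9 : ((2*t+2*m+5:ℕ):ℚ) + 1 ≠ 0 := by positivity
  have hs10 : ((2*t+2*m+6:ℕ):ℚ) + 1 ≠ 0 := by positivity
  have hT13 : ((t+2)! : ℚ) * ((t+m+5)! : ℚ) * ((t+m+4)! : ℚ) * ((t+m+3)! : ℚ) *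
      ((2*t+2*m+5).choose (t+m+2) : ℚ) * ((2*t+m+6).choose (t+2) : ℚ) =
      (2*(t:ℚ)+m+5)*(2*(t:ℚ)+m+6)*((t:ℚ)+m+3)*((t:ℚ)+m+4)*((t:ℚ)+m+5) *
        ((2*t+2*m+5)! : ℚ) * ((2*t+m+4)! : ℚ) := by
    rw [Nat.cast_choose ℚ (show t+m+2 ≤ 2*t+2*m+5 by omega),
        Nat.cast_choose ℚ (show t+2 ≤ 2*t+m+6 by omega),
        show 2*t+2*m+5 - (t+m+2) = t+m+3 by omega,
        show 2*t+m+6 - (t+2) = t+m+4 by omega]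
    simp only [fact_step (2*t+m+6) (2*t+m+5) (by omega), fact_step (2*t+m+5) (2*t+m+4) (by omega),
      fact_step (t+m+5) (t+m+4) (by omega), fact_step (t+m+4) (t+m+3) (by omega),
      fact_step (t+m+3) (t+m+2) (by omega), fact_step (t+m+2) (t+m+1) (by omega),
      fact_step (t+2) (t+1) (by omega), fact_step (t+1) t (by omega)]
    field_simp
    push_cast
    ring
  have hT14 : ((t+2)! : ℚ) * ((t+m+5)! : ℚ) * ((t+m+4)! : ℚ) * ((t+m+3)! : ℚ) *
      ((2*t+2*m+5).choose (t+m+2) : ℚ) * ((2*t+m+6).choose (t+m+5) : ℚ) =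
      (2*(t:ℚ)+m+5)*(2*(t:ℚ)+m+6)*((t:ℚ)+2)*((t:ℚ)+m+3)*((t:ℚ)+m+4) *
        ((2*t+2*m+5)! : ℚ) * ((2*t+m+4)! : ℚ) := by
    rw [Nat.cast_choose ℚ (show t+m+2 ≤ 2*t+2*m+5 by omega),
        Nat.cast_choose ℚ (show t+m+5 ≤ 2*t+m+6 by omega),
        show 2*t+2*m+5 - (t+m+2) = t+m+3 by omega,
        show 2*t+m+6 - (t+m+5) = t+1 by omega]
    simp only [fact_step (2*t+m+6) (2*t+m+5) (by omega), fact_step (2*t+m+5) (2*t+m+4) (by omega),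
      fact_step (t+m+5) (t+m+4) (by omega), fact_step (t+m+4) (t+m+3) (by omega),
      fact_step (t+m+3) (t+m+2) (by omega), fact_step (t+m+2) (t+m+1) (by omega),
      fact_step (t+2) (t+1) (by omega), fact_step (t+1) t (by omega)]
    field_simp
    push_cast
    ring
  have hT23 : ((t+2)! : ℚ) * ((t+m+5)! : ℚ) * ((t+m+4)! : ℚ) * ((t+m+3)! : ℚ) *
      ((2*t+2*m+5).choose (t+m+4) : ℚ) * ((2*t+m+6).choose (t+2) : ℚ) =
      (2*(t:ℚ)+m+5)*(2*(t:ℚ)+m+6)*((t:ℚ)+m+2)*((t:ℚ)+m+3)*((t:ℚ)+m+5) *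
        ((2*t+2*m+5)! : ℚ) * ((2*t+m+4)! : ℚ) := by
    rw [Nat.cast_choose ℚ (show t+m+4 ≤ 2*t+2*m+5 by omega),
        Nat.cast_choose ℚ (show t+2 ≤ 2*t+m+6 by omega),
        show 2*t+2*m+5 - (t+m+4) = t+m+1 by omega,
        show 2*t+m+6 - (t+2) = t+m+4 by omega]
    simp only [fact_step (2*t+m+6) (2*t+m+5) (by omega), fact_step (2*t+m+5) (2*t+m+4) (by omega),
      fact_step (t+m+5) (t+m+4) (by omega), fact_step (t+m+4) (t+m+3) (by omega),
      fact_step (t+m+3) (t+m+2) (by omega), fact_step (t+m+2) (t+m+1) (by omega),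
      fact_step (t+2) (t+1) (by omega), fact_step (t+1) t (by omega)]
    field_simp
    push_cast
    ring
  have hT24 : ((t+2)! : ℚ) * ((t+m+5)! : ℚ) * ((t+m+4)! : ℚ) * ((t+m+3)! : ℚ) *
      ((2*t+2*m+5).choose (t+m+4) : ℚ) * ((2*t+m+6).choose (t+m+5) : ℚ) =
      (2*(t:ℚ)+m+5)*(2*(t:ℚ)+m+6)*((t:ℚ)+2)*((t:ℚ)+m+2)*((t:ℚ)+m+3) *
        ((2*t+2*m+5)! : ℚ) * ((2*t+m+4)! : ℚ) := by
    rw [Nat.cast_choose ℚ (show t+m+4 ≤ 2*t+2*m+5 by omega),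
        Nat.cast_choose ℚ (show t+m+5 ≤ 2*t+m+6 by omega),
        show 2*t+2*m+5 - (t+m+4) = t+m+1 by omega,
        show 2*t+m+6 - (t+m+5) = t+1 by omega]
    simp only [fact_step (2*t+m+6) (2*t+m+5) (by omega), fact_step (2*t+m+5) (2*t+m+4) (by omega),
      fact_step (t+m+5) (t+m+4) (by omega), fact_step (t+m+4) (t+m+3) (by omega),
      fact_step (t+m+3) (t+m+2) (by omega), fact_step (t+m+2) (t+m+1) (by omega),
      fact_step (t+2) (t+1) (by omega), fact_step (t+1) t (by omega)]
    field_simp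
    push_cast
    ring
  have hT57 : ((t+2)! : ℚ) * ((t+m+5)! : ℚ) * ((t+m+4)! : ℚ) * ((t+m+3)! : ℚ) *
      ((2*t+2*m+7).choose (t+m+3) : ℚ) * ((2*t+m+4).choose (t+m+3) : ℚ) =
      (2*(t:ℚ)+2*m+6)*(2*(t:ℚ)+2*m+7)*((t:ℚ)+2)*((t:ℚ)+m+4)*((t:ℚ)+m+5) *
        ((2*t+2*m+5)! : ℚ) * ((2*t+m+4)! : ℚ) := by
    rw [Nat.cast_choose ℚ (show t+m+3 ≤ 2*t+2*m+7 by omega),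
        Nat.cast_choose ℚ (show t+m+3 ≤ 2*t+m+4 by omega),
        show 2*t+2*m+7 - (t+m+3) = t+m+4 by omega,
        show 2*t+m+4 - (t+m+3) = t+1 by omega]
    simp only [fact_step (2*t+2*m+7) (2*t+2*m+6) (by omega), fact_step (2*t+2*m+6) (2*t+2*m+5) (by omega),
      fact_step (t+m+5) (t+m+4) (by omega), fact_step (t+m+4) (t+m+3) (by omega),
      fact_step (t+m+3) (t+m+2) (by omega), fact_step (t+m+2) (t+m+1) (by omega),
      fact_step (t+2) (t+1) (by omega), fact_step (t+1) t (by omega)]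
    field_simp
    push_cast
    ring
  have hT58 : ((t+2)! : ℚ) * ((t+m+5)! : ℚ) * ((t+m+4)! : ℚ) * ((t+m+3)! : ℚ) *
      ((2*t+2*m+7).choose (t+m+3) : ℚ) * ((2*t+m+4).choose (t+m+4) : ℚ) =
      (2*(t:ℚ)+2*m+6)*(2*(t:ℚ)+2*m+7)*((t:ℚ)+1)*((t:ℚ)+2)*((t:ℚ)+m+5) *
        ((2*t+2*m+5)! : ℚ) * ((2*t+m+4)! : ℚ) := by
    rw [Nat.cast_choose ℚ (show t+m+3 ≤ 2*t+2*m+7 by omega),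
        Nat.cast_choose ℚ (show t+m+4 ≤ 2*t+m+4 by omega),
        show 2*t+2*m+7 - (t+m+3) = t+m+4 by omega,
        show 2*t+m+4 - (t+m+4) = t by omega]
    simp only [fact_step (2*t+2*m+7) (2*t+2*m+6) (by omega), fact_step (2*t+2*m+6) (2*t+2*m+5) (by omega),
      fact_step (t+m+5) (t+m+4) (by omega), fact_step (t+m+4) (t+m+3) (by omega),
      fact_step (t+m+3) (t+m+2) (by omega), fact_step (t+m+2) (t+m+1) (by omega),
      fact_step (t+2) (t+1) (by omega), fact_step (t+1) t (by omega)]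
    field_simp
    push_cast
    ring
  have hT67 : ((t+2)! : ℚ) * ((t+m+5)! : ℚ) * ((t+m+4)! : ℚ) * ((t+m+3)! : ℚ) *
      ((2*t+2*m+7).choose (t+m+5) : ℚ) * ((2*t+m+4).choose (t+m+3) : ℚ) =
      (2*(t:ℚ)+2*m+6)*(2*(t:ℚ)+2*m+7)*((t:ℚ)+2)*((t:ℚ)+m+3)*((t:ℚ)+m+4) *
        ((2*t+2*m+5)! : ℚ) * ((2*t+m+4)! : ℚ) := by
    rw [Nat.cast_choose ℚ (show t+m+5 ≤ 2*t+2*m+7 by omega),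
        Nat.cast_choose ℚ (show t+m+3 ≤ 2*t+m+4 by omega),
        show 2*t+2*m+7 - (t+m+5) = t+m+2 by omega,
        show 2*t+m+4 - (t+m+3) = t+1 by omega]
    simp only [fact_step (2*t+2*m+7) (2*t+2*m+6) (by omega), fact_step (2*t+2*m+6) (2*t+2*m+5) (by omega),
      fact_step (t+m+5) (t+m+4) (by omega), fact_step (t+m+4) (t+m+3) (by omega),
      fact_step (t+m+3) (t+m+2) (by omega), fact_step (t+m+2) (t+m+1) (by omega),
      fact_step (t+2) (t+1) (by omega), fact_step (t+1) t (by omega)]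
    field_simp
    push_cast
    ring
  have hT68 : ((t+2)! : ℚ) * ((t+m+5)! : ℚ) * ((t+m+4)! : ℚ) * ((t+m+3)! : ℚ) *
      ((2*t+2*m+7).choose (t+m+5) : ℚ) * ((2*t+m+4).choose (t+m+4) : ℚ) =
      (2*(t:ℚ)+2*m+6)*(2*(t:ℚ)+2*m+7)*((t:ℚ)+1)*((t:ℚ)+2)*((t:ℚ)+m+3) *
        ((2*t+2*m+5)! : ℚ) * ((2*t+m+4)! : ℚ) := by
    rw [Nat.cast_choose ℚ (show t+m+5 ≤ 2*t+2*m+7 by omega),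
        Nat.cast_choose ℚ (show t+m+4 ≤ 2*t+m+4 by omega),
        show 2*t+2*m+7 - (t+m+5) = t+m+2 by omega,
        show 2*t+m+4 - (t+m+4) = t by omega]
    simp only [fact_step (2*t+2*m+7) (2*t+2*m+6) (by omega), fact_step (2*t+2*m+6) (2*t+2*m+5) (by omega),
      fact_step (t+m+5) (t+m+4) (by omega), fact_step (t+m+4) (t+m+3) (by omega),
      fact_step (t+m+3) (t+m+2) (by omega), fact_step (t+m+2) (t+m+1) (by omega),
      fact_step (t+2) (t+1) (by omega), fact_step (t+1) t (by omega)]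
    field_simp
    push_cast
    ring
  have hnum : ((2*t+2*m+6)! : ℚ) = (2*(t:ℚ)+2*m+6) * ((2*t+2*m+5)! : ℚ) := by
    rw [fact_step (2*t+2*m+6) (2*t+2*m+5) (by omega)]; push_cast; ring
  rw [hnum]
  linear_combination hT13 - hT14 - hT23 + hT24 - hT57 + hT58 + hT67 - hT68

set_option maxHeartbeats 1000000 in
lemma key1 (m : ℕ) :
    (1! : ℚ) * ((m+4)! : ℚ) * ((m+3)! : ℚ) * ((m+2)! : ℚ) *
      ((((2*m+3).choose (m+1) : ℚ) - ((2*m+3).choose (m+3) : ℚ)) *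
       (((m+4).choose 1 : ℚ) - ((m+4).choose (m+4) : ℚ)) -
       (((2*m+5).choose (m+2) : ℚ) - ((2*m+5).choose (m+4) : ℚ)) *
       (((m+2).choose (m+2) : ℚ) - ((m+2).choose (m+3) : ℚ))) =
    ((m:ℚ)+3) * ((m:ℚ)+2) * ((m:ℚ)+1) * ((2*m+4)! : ℚ) * ((m+2)! : ℚ) := by
  have hb1 : (m ! : ℚ) ≠ 0 := by positivity
  have hb2 : ((2*m+3)! : ℚ) ≠ 0 := by positivity
  have hs1 : ((m:ℕ):ℚ) + 1 ≠ 0 := by positivity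
  have hs2 : ((m+1:ℕ):ℚ) + 1 ≠ 0 := by positivity
  have hs3 : ((m+2:ℕ):ℚ) + 1 ≠ 0 := by positivity
  have hs4 : ((m+3:ℕ):ℚ) + 1 ≠ 0 := by positivity
  have hs5 : ((2*m+3:ℕ):ℚ) + 1 ≠ 0 := by positivity
  have hs6 : ((2*m+4:ℕ):ℚ) + 1 ≠ 0 := by positivity
  rw [Nat.choose_eq_zero_of_lt (show m+2 < m+3 by omega),
      Nat.cast_choose ℚ (show m+1 ≤ 2*m+3 by omega),
      Nat.cast_choose ℚ (show m+3 ≤ 2*m+3 by omega),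
      Nat.cast_choose ℚ (show m+2 ≤ 2*m+5 by omega),
      Nat.cast_choose ℚ (show m+4 ≤ 2*m+5 by omega),
      show 2*m+3-(m+1) = m+2 by omega, show 2*m+3-(m+3) = m by omega,
      show 2*m+5-(m+2) = m+3 by omega, show 2*m+5-(m+4) = m+1 by omega]
  simp only [Nat.choose_one_right, Nat.choose_self, Nat.factorial_one,
    fact_step (m+4) (m+3) (by omega), fact_step (m+3) (m+2) (by omega),
    fact_step (m+2) (m+1) (by omega), fact_step (m+1) m (by omega),
    fact_step (2*m+5) (2*m+4) (by omega), fact_step (2*m+4) (2*m+3) (by omega)]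
  field_simp
  push_cast
  ring

set_option maxHeartbeats 1000000 in
lemma key0 (m : ℕ) :
    (0! : ℚ) * ((m+3)! : ℚ) * ((m+2)! : ℚ) * ((m+1)! : ℚ) *
      ((((2*m+1).choose m : ℚ) - ((2*m+1).choose (m+2) : ℚ)) *
       (((m+2).choose 0 : ℚ) - ((m+2).choose (m+3) : ℚ)) -
       (((2*m+3).choose (m+1) : ℚ) - ((2*m+3).choose (m+3) : ℚ)) *
       ((m.choose (m+1) : ℚ) - (m.choose (m+2) : ℚ))) =
    ((m:ℚ)+3) * ((m:ℚ)+2) * ((m:ℚ)+1) * ((2*m+2)! : ℚ) * (m ! : ℚ) := by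
  rcases m with _ | s
  · norm_num [Nat.factorial, Nat.choose]
  · have hb1 : (s ! : ℚ) ≠ 0 := by positivity
    have hb2 : ((2*s+3)! : ℚ) ≠ 0 := by positivity
    have hs1 : ((s:ℕ):ℚ) + 1 ≠ 0 := by positivity
    have hs2 : ((s+1:ℕ):ℚ) + 1 ≠ 0 := by positivity
    have hs3 : ((s+2:ℕ):ℚ) + 1 ≠ 0 := by positivity
    have hs4 : ((s+3:ℕ):ℚ) + 1 ≠ 0 := by positivity
    have hs5 : ((2*s+3:ℕ):ℚ) + 1 ≠ 0 := by positivity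
    rw [show s+1+3 = s+4 by omega, show s+1+2 = s+3 by omega, show s+1+1 = s+2 by omega,
        show 2*(s+1)+1 = 2*s+3 by omega, show 2*(s+1)+3 = 2*s+5 by omega,
        show 2*(s+1)+2 = 2*s+4 by omega,
        Nat.choose_eq_zero_of_lt (show s+3 < s+4 by omega),
        Nat.choose_eq_zero_of_lt (show s+1 < s+2 by omega),
        Nat.choose_eq_zero_of_lt (show s+1 < s+3 by omega),
        Nat.cast_choose ℚ (show s+1 ≤ 2*s+3 by omega),
        Nat.cast_choose ℚ (show s+3 ≤ 2*s+3 by omega),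
        Nat.cast_choose ℚ (show s+2 ≤ 2*s+5 by omega),
        Nat.cast_choose ℚ (show s+4 ≤ 2*s+5 by omega),
        show 2*s+3-(s+1) = s+2 by omega, show 2*s+3-(s+3) = s by omega,
        show 2*s+5-(s+2) = s+3 by omega, show 2*s+5-(s+4) = s+1 by omega]
    simp only [Nat.choose_zero_right, Nat.factorial_zero,
      fact_step (s+4) (s+3) (by omega), fact_step (s+3) (s+2) (by omega),
      fact_step (s+2) (s+1) (by omega), fact_step (s+1) s (by omega),
      fact_step (2*s+5) (2*s+4) (by omega), fact_step (2*s+4) (2*s+3) (by omega)]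
    field_simp
    push_cast
    ring

lemma key_s10 (k m : ℕ) :
    (k ! : ℚ) * ((k+m+3)! : ℚ) * ((k+m+2)! : ℚ) * ((k+m+1)! : ℚ) *
      ((((2*k+2*m+1).choose (k+m) : ℚ) - ((2*k+2*m+1).choose (k+m+2) : ℚ)) *
       (((2*k+m+2).choose k : ℚ) - ((2*k+m+2).choose (k+m+3) : ℚ)) -
       (((2*k+2*m+3).choose (k+m+1) : ℚ) - ((2*k+2*m+3).choose (k+m+3) : ℚ)) *
       (((2*k+m).choose (k+m+1) : ℚ) - ((2*k+m).choose (k+m+2) : ℚ))) =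
    ((m:ℚ)+3) * ((m:ℚ)+2) * ((m:ℚ)+1) * ((2*k+2*m+2)! : ℚ) * ((2*k+m)! : ℚ) := by
  rcases lt_or_ge k 2 with hk | hk
  · interval_cases k
    · rw [show 2*0+2*m+1 = 2*m+1 by omega, show 2*0+m+2 = m+2 by omega,
          show 2*0+2*m+3 = 2*m+3 by omega, show 2*0+2*m+2 = 2*m+2 by omega,
          show 2*0+m = m by omega]
      exact key0 m
    · rw [show 2*1+2*m+1 = 2*m+3 by omega, show 2*1+m+2 = m+4 by omega,
          show 2*1+2*m+3 = 2*m+5 by omega, show 2*1+2*m+2 = 2*m+4 by omega,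
          show 2*1+m = m+2 by omega, show 1+m+3 = m+4 by omega, show 1+m+2 = m+3 by omega,
          show 1+m+1 = m+2 by omega, show 1+m = m+1 by omega]
      exact key1 m
  · obtain ⟨t, rfl⟩ : ∃ t, k = t+2 := ⟨k-2, by omega⟩
    rw [show t+2+m+3 = t+m+5 by omega, show t+2+m+2 = t+m+4 by omega,
        show t+2+m+1 = t+m+3 by omega, show t+2+m = t+m+2 by omega,
        show 2*(t+2)+2*m+3 = 2*t+2*m+7 by omega, show 2*(t+2)+2*m+2 = 2*t+2*m+6 by omega,
        show 2*(t+2)+2*m+1 = 2*t+2*m+5 by omega, show 2*(t+2)+m+2 = 2*t+m+6 by omega,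
        show 2*(t+2)+m = 2*t+m+4 by omega]
    exact key2 t m

theorem S_is_integer (k j : ℕ) (hj : 3 ≤ j) :
    (∃ n : ℕ, S k j = n) ∧
      Nat.factorial k * Nat.factorial (k + j) * Nat.factorial (k + j - 1) *
          Nat.factorial (k + j - 2) ∣
        j * (j - 1) * (j - 2) * Nat.factorial (2 * k + 2 * j - 4) *
          Nat.factorial (2 * k + j - 3) := by
  obtain ⟨m, rfl⟩ : ∃ m, j = m + 3 := ⟨j - 3, by omega⟩
  -- the integer determinant
  set Az : ℤ := ((((2*k+2*m+1).choose (k+m) : ℤ) - ((2*k+2*m+1).choose (k+m+2) : ℤ)) *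
       (((2*k+m+2).choose k : ℤ) - ((2*k+m+2).choose (k+m+3) : ℤ)) -
       (((2*k+2*m+3).choose (k+m+1) : ℤ) - ((2*k+2*m+3).choose (k+m+3) : ℤ)) *
       (((2*k+m).choose (k+m+1) : ℤ) - ((2*k+m).choose (k+m+2) : ℤ))) with hAz
  have h2 : ((k ! * (k+m+3)! * (k+m+2)! * (k+m+1)! : ℕ) : ℚ) * ((Az : ℤ) : ℚ)
      = (((m+3) * (m+2) * (m+1) * (2*k+2*m+2)! * (2*k+m)! : ℕ) : ℚ) := by
    rw [hAz]; push_cast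
    linear_combination key_s10 k m
  have h3 : ((k ! * (k+m+3)! * (k+m+2)! * (k+m+1)! : ℕ) : ℤ) * Az
      = (((m+3) * (m+2) * (m+1) * (2*k+2*m+2)! * (2*k+m)! : ℕ) : ℤ) := by
    exact_mod_cast h2
  have hdpos : (0:ℤ) < ((k ! * (k+m+3)! * (k+m+2)! * (k+m+1)! : ℕ) : ℤ) := by
    have : 0 < k ! * (k+m+3)! * (k+m+2)! * (k+m+1)! := by positivity
    exact_mod_cast this
  have hAznn : 0 ≤ Az := by
    by_contra hneg
    push_neg at hneg
    have h4 : ((k ! * (k+m+3)! * (k+m+2)! * (k+m+1)! : ℕ) : ℤ) * Az < 0 :=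
      mul_neg_of_pos_of_neg hdpos hneg
    rw [h3] at h4
    have : (0:ℤ) ≤ (((m+3) * (m+2) * (m+1) * (2*k+2*m+2)! * (2*k+m)! : ℕ) : ℤ) := Int.ofNat_nonneg _
    omega
  obtain ⟨N, hN⟩ : ∃ N : ℕ, Az = (N : ℤ) := ⟨Az.toNat, (Int.toNat_of_nonneg hAznn).symm⟩
  have h5 : k ! * (k+m+3)! * (k+m+2)! * (k+m+1)! * N
      = (m+3) * (m+2) * (m+1) * (2*k+2*m+2)! * (2*k+m)! := by
    have := h3
    rw [hN] at this
    exact_mod_cast this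
  have hidx1 : k + (m+3) = k+m+3 := by omega
  have hidx2 : k+m+3-1 = k+m+2 := by omega
  have hidx3 : k+m+3-2 = k+m+1 := by omega
  have hidx4 : 2*k+2*(m+3)-4 = 2*k+2*m+2 := by omega
  have hidx5 : 2*k+(m+3)-3 = 2*k+m := by omega
  constructor
  · refine ⟨N, ?_⟩
    rw [S, hidx1, hidx2, hidx3, hidx4, hidx5]
    rw [div_eq_iff (by positivity)]
    have h6 : ((k ! * (k+m+3)! * (k+m+2)! * (k+m+1)! * N : ℕ) : ℚ)
        = (((m+3) * (m+2) * (m+1) * (2*k+2*m+2)! * (2*k+m)! : ℕ) : ℚ) := by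
      exact_mod_cast congrArg (fun x : ℕ => (x : ℚ)) h5
    push_cast at h6 ⊢
    linear_combination -h6
  · rw [hidx1, hidx2, hidx3, hidx4, hidx5, show m+3-1 = m+2 by omega,
        show m+3-2 = m+1 by omega]
    exact ⟨N, h5.symm⟩
end

section
/- Let t be a function assigning a rational number t(k,j) to every pair of integers k ≥ 0, j ≥ 2. Suppose that t(0,j) = Cat(j−2) for all j ≥ 2, and that k·(j+1)·t(k,j) = (j−1)·(3k+2j−4)·t(k−1,j+1) for all k ≥ 1 and j ≥ 2. Then t(k,j) = j·(j−1)·(3k+2j−4)! / (k!·(k+j−1)!·(k+j)!) for all k ≥ 0 and j ≥ 2. -/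
/-!
Since `k (j+1) ≠ 0` for `k ≥ 1`, the growth identity expresses `t(k,j)` through `t(k-1,j+1)`, so
by induction on `k` the values at `k = 0` determine `t`. The closed form agrees with `Cat(j-2)`
at `k = 0` and satisfies the identity, both being factorial computations.
-/

open Nat

def quasiTriangulationCount (k j : ℕ) : ℚ :=
  (j * (j - 1) * (3 * k + 2 * j - 4)! : ℚ) / (k ! * (k + j - 1)! * (k + j)! : ℚ)

def SatisfiesGrowthIdentity (t : ℕ → ℕ → ℚ) : Prop :=
  ∀ k j : ℕ, 1 ≤ k → 2 ≤ j →
    (k : ℚ) * ((j : ℚ) + 1) * t k j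
      = ((j : ℚ) - 1) * (3 * (k : ℚ) + 2 * (j : ℚ) - 4) * t (k - 1) (j + 1)

theorem catalan_eq_factorial_div (m : ℕ) :
    (catalan m : ℚ) = (2 * m)! / (m ! * (m + 1)!) := by
  have h := congrArg (Nat.cast : ℕ → ℚ) (succ_mul_catalan_eq_centralBinom m)
  rw [centralBinom_eq_two_mul_choose, Nat.cast_choose ℚ (by omega : m ≤ 2 * m),
    show 2 * m - m = m by omega] at h
  rw [factorial_succ]
  push_cast at h ⊢
  field_simp at h ⊢
  linear_combination h

theorem quasiTriangulationCount_zero (m : ℕ) :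
    quasiTriangulationCount 0 (m + 2) = catalan m := by
  rw [catalan_eq_factorial_div, quasiTriangulationCount,
    show 3 * 0 + 2 * (m + 2) - 4 = 2 * m by omega, show 0 + (m + 2) - 1 = m + 1 by omega,
    zero_add]
  simp only [factorial_succ]
  push_cast
  field_simp
  ring

theorem satisfiesGrowthIdentity_quasiTriangulationCount :
    SatisfiesGrowthIdentity quasiTriangulationCount := by
  rintro k j hk hj
  obtain ⟨k, rfl⟩ : ∃ i, k = i + 1 := ⟨k - 1, by omega⟩
  obtain ⟨m, rfl⟩ : ∃ m, j = m + 2 := ⟨j - 2, by omega⟩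
  simp only [quasiTriangulationCount, Nat.add_sub_cancel,
    show 3 * (k + 1) + 2 * (m + 2) - 4 = (3 * k + 2 * m + 2) + 1 by omega,
    show 3 * k + 2 * (m + 2 + 1) - 4 = 3 * k + 2 * m + 2 by omega,
    show k + 1 + (m + 2) = k + m + 3 by omega, show k + (m + 2 + 1) = k + m + 3 by omega,
    factorial_succ]
  push_cast
  field_simp
  ring

theorem SatisfiesGrowthIdentity.eq_of_eq_at_zero {s t : ℕ → ℕ → ℚ}
    (hs : SatisfiesGrowthIdentity s) (ht : SatisfiesGrowthIdentity t)
    (h0 : ∀ j, 2 ≤ j → s 0 j = t 0 j) : ∀ k j, 2 ≤ j → s k j = t k j := by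
  intro k
  induction k with
  | zero => exact h0
  | succ k ih =>
    intro j hj
    have hne : ((k + 1 : ℕ) : ℚ) * ((j : ℚ) + 1) ≠ 0 := by positivity
    apply mul_left_cancel₀ hne
    rw [hs (k + 1) j (by omega) hj, ht (k + 1) j (by omega) hj, Nat.add_sub_cancel,
      ih (j + 1) (by omega)]

theorem growth_determines_T (t : ℕ → ℕ → ℚ)
    (hbase : ∀ j : ℕ, 2 ≤ j → t 0 j = (catalan (j - 2) : ℚ))
    (hrec : ∀ k j : ℕ, 1 ≤ k → 2 ≤ j →
      (k : ℚ) * ((j : ℚ) + 1) * t k j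
        = ((j : ℚ) - 1) * (3 * (k : ℚ) + 2 * (j : ℚ) - 4) * t (k - 1) (j + 1)) :
    ∀ k j : ℕ, 2 ≤ j →
      t k j = (j * (j - 1) * Nat.factorial (3 * k + 2 * j - 4) : ℚ) /
        (Nat.factorial k * Nat.factorial (k + j - 1) * Nat.factorial (k + j) : ℚ) := by
  refine SatisfiesGrowthIdentity.eq_of_eq_at_zero hrec
    satisfiesGrowthIdentity_quasiTriangulationCount fun j hj => ?_
  obtain ⟨m, rfl⟩ : ∃ m, j = m + 2 := ⟨j - 2, by omega⟩
  rw [hbase _ hj, Nat.add_sub_cancel]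
  exact (quasiTriangulationCount_zero m).symm
end

section
/- Let s be a function assigning a rational number s(k,j) to every pair of integers k ≥ 0, j ≥ 3. Suppose that s(0,j) = Cat(j−2) for all j ≥ 3, and that k·(j+1)·s(k,j) = (j−2)·(2k+j−3)·s(k−1,j+1) for all k ≥ 1 and j ≥ 3. Then s(k,j) = j·(j−1)·(j−2)·(2k+2j−4)!·(2k+j−3)! / (k!·(k+j)!·(k+j−1)!·(k+j−2)!) for all k ≥ 0 and j ≥ 3. -/
lemma cat_fact (n : ℕ) :
    catalan n * ((n + 1).factorial * n.factorial) = (2 * n).factorial := by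
  have h1 := succ_mul_catalan_eq_centralBinom n
  have h2 := Nat.choose_mul_factorial_mul_factorial
    (Nat.le_mul_of_pos_left n (by norm_num) : n ≤ 2 * n)
  rw [Nat.centralBinom] at h1
  have h3 : 2 * n - n = n := by omega
  rw [h3] at h2
  calc catalan n * ((n + 1).factorial * n.factorial)
      = ((n + 1) * catalan n) * n.factorial * n.factorial := by
        rw [Nat.factorial_succ]; ring
    _ = (2 * n).choose n * n.factorial * n.factorial := by rw [h1]
    _ = (2 * n).factorial := h2

theorem growth_determines_S (s : ℕ → ℕ → ℚ)
    (hbase : ∀ j : ℕ, 3 ≤ j → s 0 j = (catalan (j - 2) : ℚ))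
    (hrec : ∀ k j : ℕ, 1 ≤ k → 3 ≤ j →
      (k : ℚ) * ((j : ℚ) + 1) * s k j
        = ((j : ℚ) - 2) * (2 * (k : ℚ) + (j : ℚ) - 3) * s (k - 1) (j + 1)) :
    ∀ k j : ℕ, 3 ≤ j →
      s k j = (j * (j - 1) * (j - 2) * Nat.factorial (2 * k + 2 * j - 4) *
          Nat.factorial (2 * k + j - 3) : ℚ) /
        (Nat.factorial k * Nat.factorial (k + j) * Nat.factorial (k + j - 1) *
          Nat.factorial (k + j - 2) : ℚ) := by
  intro k
  induction k with
  | zero =>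
    intro j hj
    obtain ⟨m, rfl⟩ : ∃ m, j = m + 3 := ⟨j - 3, by omega⟩
    rw [hbase (m + 3) (by omega)]
    have e0 : m + 3 - 2 = m + 1 := by omega
    have e1 : 2 * 0 + 2 * (m + 3) - 4 = 2 * (m + 1) := by omega
    have e2 : 2 * 0 + (m + 3) - 3 = m := by omega
    have e3 : 0 + (m + 3) = m + 3 := by omega
    have e4 : m + 3 - 1 = m + 2 := by omega
    have e5 : m + 3 - 2 = m + 1 := by omega
    rw [e0, e1, e2, e3, e4, e5]
    have key : ((catalan (m + 1) : ℚ)) * ((m + 2).factorial : ℚ) * ((m + 1).factorial : ℚ)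
        = ((2 * (m + 1)).factorial : ℚ) := by
      have := congrArg (fun n : ℕ => (n : ℚ)) (cat_fact (m + 1))
      push_cast at this
      linarith [this]
    have f3 : ((m + 3).factorial : ℚ)
        = (m + 3) * (m + 2) * (m + 1) * (m.factorial : ℚ) := by
      rw [show m + 3 = (m + 2) + 1 from rfl, Nat.factorial_succ,
        show m + 2 = (m + 1) + 1 from rfl, Nat.factorial_succ, Nat.factorial_succ]
      push_cast; ring
    have hne : ∀ n : ℕ, (n.factorial : ℚ) ≠ 0 := fun n => by
      exact_mod_cast n.factorial_ne_zero
    rw [eq_div_iff (by positivity)]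
    rw [f3]
    push_cast [Nat.factorial_zero]
    push_cast at key
    linear_combination (((m : ℚ) + 3) * ((m : ℚ) + 2) * ((m : ℚ) + 1) * (m.factorial : ℚ)) * key
  | succ k ih =>
    intro j hj
    obtain ⟨m, rfl⟩ : ∃ m, j = m + 3 := ⟨j - 3, by omega⟩
    have hr := hrec (k + 1) (m + 3) (by omega) (by omega)
    simp only [Nat.add_sub_cancel] at hr
    have hih := ih (m + 4) (by omega)
    have e1 : 2 * k + 2 * (m + 4) - 4 = 2 * k + 2 * m + 4 := by omega
    have e2 : 2 * k + (m + 4) - 3 = 2 * k + m + 1 := by omega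
    have e3 : k + (m + 4) = k + m + 4 := by omega
    have e4 : k + m + 4 - 1 = k + m + 3 := by omega
    have e5 : k + m + 4 - 2 = k + m + 2 := by omega
    rw [e1, e2, e3, e4, e5] at hih
    have g1 : 2 * (k + 1) + 2 * (m + 3) - 4 = 2 * k + 2 * m + 4 := by omega
    have g2 : 2 * (k + 1) + (m + 3) - 3 = 2 * k + m + 2 := by omega
    have g3 : k + 1 + (m + 3) = k + m + 4 := by omega
    have g4 : k + m + 4 - 1 = k + m + 3 := by omega
    have g5 : k + m + 4 - 2 = k + m + 2 := by omega
    rw [g1, g2, g3, g4, g5]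
    have fk : ((k + 1).factorial : ℚ) = (k + 1) * (k.factorial : ℚ) := by
      rw [Nat.factorial_succ]; push_cast; ring
    have ff : ((2 * k + m + 2).factorial : ℚ)
        = (2 * k + m + 2) * ((2 * k + m + 1).factorial : ℚ) := by
      rw [show 2 * k + m + 2 = (2 * k + m + 1) + 1 from rfl, Nat.factorial_succ]
      push_cast; ring
    have hne : ∀ n : ℕ, ((n.factorial : ℚ)) ≠ 0 := fun n => by
      exact_mod_cast n.factorial_ne_zero
    have hA : ((k + 1 : ℕ) : ℚ) * (((m + 3 : ℕ) : ℚ) + 1) ≠ 0 := by push_cast; positivity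
    have hs : s (k + 1) (m + 3)
        = (((m + 3 : ℕ) : ℚ) - 2) * (2 * ((k + 1 : ℕ) : ℚ) + ((m + 3 : ℕ) : ℚ) - 3)
            * s k (m + 3 + 1) / (((k + 1 : ℕ) : ℚ) * (((m + 3 : ℕ) : ℚ) + 1)) := by
      rw [eq_div_iff hA]
      linear_combination hr
    rw [hs, show m + 3 + 1 = m + 4 from rfl, hih, fk, ff]
    push_cast
    rw [div_eq_div_iff (by positivity) (by positivity)]
    field_simp
    ring
end

section
/- Let N be a function assigning a rational number N(a,b) to every pair of integers a ≥ 1, b ≥ 1. Suppose that N(1,b) = 1 for all b ≥ 1, and that (a+1)·a·N(a+1,b) = (b+1)·b·N(a,b+1) for all a ≥ 1 and b ≥ 1. Then N(a,b) = (a+b−1)!·(a+b−2)! / (a!·(a−1)!·b!·(b−1)!) for all a ≥ 1 and b ≥ 1. -/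
def narayanaFormula (a b : ℕ) : ℚ :=
  (Nat.factorial (a + b - 1) * Nat.factorial (a + b - 2) : ℚ) /
    (Nat.factorial a * Nat.factorial (a - 1) * Nat.factorial b * Nat.factorial (b - 1) : ℚ)

def SatisfiesNarayanaRecurrence (N : ℕ → ℕ → ℚ) : Prop :=
  ∀ a b : ℕ, 1 ≤ a → 1 ≤ b →
    ((a : ℚ) + 1) * (a : ℚ) * N (a + 1) b = ((b : ℚ) + 1) * (b : ℚ) * N a (b + 1)

/-- Since `a + 1 ≥ 2`, the recurrence can be solved for `N (a + 1) b`, so the values on the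
line `a = 1` propagate to all `a ≥ 1`. -/
theorem eq_of_satisfiesNarayanaRecurrence {N M : ℕ → ℕ → ℚ}
    (hN : SatisfiesNarayanaRecurrence N) (hM : SatisfiesNarayanaRecurrence M)
    (hbase : ∀ b : ℕ, 1 ≤ b → N 1 b = M 1 b) :
    ∀ a b : ℕ, 1 ≤ a → 1 ≤ b → N a b = M a b := by
  intro a b ha
  induction a, ha using Nat.le_induction generalizing b with
  | base => exact hbase b
  | succ a ha ih =>
    intro hb
    have hpos : ((a : ℚ) + 1) * (a : ℚ) ≠ 0 := by
      have : (1 : ℚ) ≤ a := by exact_mod_cast ha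
      positivity
    apply mul_left_cancel₀ hpos
    rw [hN a b ha hb, hM a b ha hb, ih (b + 1) (by omega)]

theorem narayanaFormula_one_left {b : ℕ} (hb : 1 ≤ b) : narayanaFormula 1 b = 1 := by
  obtain ⟨b, rfl⟩ := Nat.exists_eq_add_of_le' hb
  have hne : (Nat.factorial (b + 1) * Nat.factorial b : ℚ) ≠ 0 := by positivity
  simp only [narayanaFormula, show 1 + (b + 1) - 1 = b + 1 by omega,
    show 1 + (b + 1) - 2 = b by omega, Nat.add_sub_cancel, Nat.factorial_one, Nat.cast_one,
    one_mul, Nat.sub_self, Nat.factorial_zero, mul_one]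
  exact div_self hne

theorem narayanaFormula_succ_succ (m n : ℕ) :
    narayanaFormula (m + 1) (n + 1) =
      Nat.factorial (m + n + 1) * Nat.factorial (m + n) *
        (Nat.factorial (m + 1) * Nat.factorial m : ℚ)⁻¹ *
        (Nat.factorial (n + 1) * Nat.factorial n : ℚ)⁻¹ := by
  rw [narayanaFormula, show m + 1 + (n + 1) - 1 = m + n + 1 by omega,
    show m + 1 + (n + 1) - 2 = m + n by omega, Nat.add_sub_cancel, Nat.add_sub_cancel]
  ring

theorem succ_mul_mul_inv_factorial_succ_mul_factorial (k : ℕ) :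
    ((k : ℚ) + 2) * ((k : ℚ) + 1) * (Nat.factorial (k + 2) * Nat.factorial (k + 1) : ℚ)⁻¹ =
      (Nat.factorial (k + 1) * Nat.factorial k : ℚ)⁻¹ := by
  push_cast [Nat.factorial_succ]
  field_simp
  ring

/-- In the factorisation `narayanaFormula (m + 1) (n + 1) = (m + n + 1)! (m + n)! w m w n` with
`w k = ((k + 1)! k!)⁻¹`, both sides of the recurrence reduce to `(m + n + 2)! (m + n + 1)! w m w n`
because `(k + 2) (k + 1) w (k + 1) = w k`. -/
theorem narayanaFormula_satisfiesNarayanaRecurrence :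
    SatisfiesNarayanaRecurrence narayanaFormula := by
  intro a b ha hb
  obtain ⟨m, rfl⟩ := Nat.exists_eq_add_of_le' ha
  obtain ⟨n, rfl⟩ := Nat.exists_eq_add_of_le' hb
  rw [narayanaFormula_succ_succ, narayanaFormula_succ_succ, show m + 1 + n = m + (n + 1) by ring]
  push_cast
  linear_combination
    (Nat.factorial (m + (n + 1) + 1) * Nat.factorial (m + (n + 1)) *
        (Nat.factorial (n + 1) * Nat.factorial n : ℚ)⁻¹) *
      succ_mul_mul_inv_factorial_succ_mul_factorial m -
    (Nat.factorial (m + (n + 1) + 1) * Nat.factorial (m + (n + 1)) *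
        (Nat.factorial (m + 1) * Nat.factorial m : ℚ)⁻¹) *
      succ_mul_mul_inv_factorial_succ_mul_factorial n

theorem growth_determines_Narayana (N : ℕ → ℕ → ℚ)
    (hbase : ∀ b : ℕ, 1 ≤ b → N 1 b = 1)
    (hrec : ∀ a b : ℕ, 1 ≤ a → 1 ≤ b →
      ((a : ℚ) + 1) * (a : ℚ) * N (a + 1) b = ((b : ℚ) + 1) * (b : ℚ) * N a (b + 1)) :
    ∀ a b : ℕ, 1 ≤ a → 1 ≤ b →
      N a b = (Nat.factorial (a + b - 1) * Nat.factorial (a + b - 2) : ℚ) /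
        (Nat.factorial a * Nat.factorial (a - 1) * Nat.factorial b *
          Nat.factorial (b - 1) : ℚ) :=
  eq_of_satisfiesNarayanaRecurrence hrec narayanaFormula_satisfiesNarayanaRecurrence
    fun b hb => (hbase b hb).trans (narayanaFormula_one_left hb).symm
end

section
/- Fix integers k ≥ 0, ℓ ≥ 2 and j ≥ 2. The number of triples (P₁,P₂,P₃) of lattice walks with steps in {E,N}, each of length (k+j−2)+(ℓ−1), starting at the origin and ending at (k+j−2, ℓ−1), such that (i) the triple is noncrossing with P₁ weakly above P₂ weakly above P₃ (for every t, the number of N-steps among the first t steps of P₁ is at least that of P₂, which is at least that of P₃), and (ii) the upper walk P₁ ends with an N-step followed by j−2 E-steps, equals B(k,ℓ,j) = j·(j−1)·(k+ℓ−2)!·(k+ℓ+j−2)!·(k+ℓ+j−3)! / (k!·(k+j)!·(k+j−1)!·ℓ!·(ℓ−1)!·(ℓ−2)!). -/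
/-- A lattice walk with steps in `{E, N}` of length `L` is encoded as a function
`Fin L → Bool`, where `true` stands for an `N`-step and `false` for an `E`-step.
`countN L P t` is the number of `N`-steps among the first `t` steps of `P`. -/
def countN (L : ℕ) (P : Fin L → Bool) (t : ℕ) : ℕ :=
  (Finset.univ.filter fun i : Fin L => (i : ℕ) < t ∧ P i = true).card

namespace BPX

/-! ### Walk statistics -/

def ups (n : ℕ) (P : Fin n → Bool) : ℕ := (Finset.univ.filter fun i => P i = true).card

def domP (n : ℕ) (g : ℤ) (u v : Fin n → Bool) : Prop :=
  ∀ t : ℕ, (countN n v t : ℤ) ≤ (countN n u t : ℤ) + g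

def tailC (j n : ℕ) (u : Fin n → Bool) : Prop :=
  (∀ i : Fin n, (i : ℕ) = n - (j - 1) → u i = true) ∧
  (∀ i : Fin n, n - (j - 2) ≤ (i : ℕ) → u i = false)

def I (e : Bool) : ℤ := if e = true then 1 else 0

lemma countN_eq_sum (n : ℕ) (P : Fin n → Bool) (t : ℕ) :
    countN n P t = ∑ i : Fin n, if (i : ℕ) < t ∧ P i = true then 1 else 0 := by
  rw [countN, Finset.card_filter]

lemma ups_eq_sum (n : ℕ) (P : Fin n → Bool) :
    ups n P = ∑ i : Fin n, if P i = true then 1 else 0 := by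
  rw [ups, Finset.card_filter]

lemma countN_zero (n : ℕ) (P : Fin n → Bool) : countN n P 0 = 0 := by
  simp [countN]

lemma countN_cons_succ (n : ℕ) (e : Bool) (P : Fin n → Bool) (t : ℕ) :
    countN (n+1) (Fin.cons e P) (t+1) = (if e = true then 1 else 0) + countN n P t := by
  rw [countN_eq_sum, countN_eq_sum, Fin.sum_univ_succ]
  simp only [Fin.cons_zero, Fin.cons_succ, Fin.val_zero, Fin.val_succ,
    Nat.zero_lt_succ, true_and, Nat.add_lt_add_iff_right]

lemma ups_cons (n : ℕ) (e : Bool) (P : Fin n → Bool) :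
    ups (n+1) (Fin.cons e P) = (if e = true then 1 else 0) + ups n P := by
  rw [ups_eq_sum, ups_eq_sum, Fin.sum_univ_succ]
  simp only [Fin.cons_zero, Fin.cons_succ]

lemma countN_le_ups (n : ℕ) (P : Fin n → Bool) (t : ℕ) : countN n P t ≤ ups n P := by
  apply Finset.card_le_card
  intro i hi
  simp only [Finset.mem_filter, Finset.mem_univ, true_and] at hi ⊢
  exact hi.2

lemma countN_stab (n : ℕ) (P : Fin n → Bool) (t : ℕ) (h : n ≤ t) :
    countN n P t = ups n P := by
  unfold countN ups
  congr 1
  apply Finset.filter_congr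
  intro i _
  simp [lt_of_lt_of_le i.isLt h]

lemma domP_nonneg {n : ℕ} {g : ℤ} {u v : Fin n → Bool} (h : domP n g u v) : 0 ≤ g := by
  have := h 0
  simp [countN_zero] at this
  omega

lemma domP_cons (n : ℕ) (g : ℤ) (e f : Bool) (u v : Fin n → Bool) :
    domP (n+1) g (Fin.cons e u) (Fin.cons f v) ↔
      0 ≤ g ∧ domP n (g + (if e = true then 1 else 0) - (if f = true then 1 else 0)) u v := by
  constructor
  · intro h
    refine ⟨domP_nonneg h, fun t => ?_⟩
    have ht := h (t+1)
    rw [countN_cons_succ, countN_cons_succ] at ht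
    push_cast at ht ⊢
    cases e <;> cases f <;> simp_all <;> omega
  · rintro ⟨hg, h⟩ t
    cases t with
    | zero => simp [countN_zero]; omega
    | succ t =>
      have ht := h t
      rw [countN_cons_succ, countN_cons_succ]
      push_cast at ht ⊢
      cases e <;> cases f <;> simp_all <;> omega

lemma tailC_cons {j n : ℕ} (hj : 2 ≤ j) (hn : j - 1 ≤ n) (e : Bool) (u : Fin n → Bool) :
    tailC j (n+1) (Fin.cons e u) ↔ tailC j n u := by
  constructor
  · rintro ⟨h1, h2⟩
    constructor
    · intro i hi
      have := h1 i.succ (by simp only [Fin.val_succ]; omega)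
      rwa [Fin.cons_succ] at this
    · intro i hi
      have := h2 i.succ (by simp only [Fin.val_succ]; omega)
      rwa [Fin.cons_succ] at this
  · rintro ⟨h1, h2⟩
    constructor
    · intro i
      refine Fin.cases ?_ ?_ i
      · intro hi
        exfalso
        simp only [Fin.val_zero] at hi
        omega
      · intro i' hi
        simp only [Fin.val_succ] at hi
        rw [Fin.cons_succ]
        exact h1 i' (by omega)
    · intro i
      refine Fin.cases ?_ ?_ i
      · intro hi
        exfalso
        simp only [Fin.val_zero] at hi
        omega
      · intro i' hi
        simp only [Fin.val_succ] at hi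
        rw [Fin.cons_succ]
        exact h2 i' (by omega)

/-! ### The counting functions -/

noncomputable def W2 (n : ℕ) (g b c : ℤ) : ℕ :=
  Nat.card {p : (Fin n → Bool) × (Fin n → Bool) //
    (ups n p.1 : ℤ) = b ∧ (ups n p.2 : ℤ) = c ∧ domP n g p.1 p.2}

noncomputable def W3 (j n : ℕ) (g₁ g₂ a b c : ℤ) : ℕ :=
  Nat.card {P : (Fin n → Bool) × (Fin n → Bool) × (Fin n → Bool) //
    (ups n P.1 : ℤ) = a ∧ (ups n P.2.1 : ℤ) = b ∧ (ups n P.2.2 : ℤ) = c ∧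
    domP n g₁ P.1 P.2.1 ∧ domP n g₂ P.2.1 P.2.2 ∧ tailC j n P.1}

lemma W2_gneg (n : ℕ) (g b c : ℤ) (hg : g < 0) : W2 n g b c = 0 := by
  rw [W2, Nat.card_eq_zero]
  left
  constructor
  rintro ⟨p, h⟩
  exact absurd (domP_nonneg h.2.2) (by omega)

lemma W3_g1neg (j n : ℕ) (g₁ g₂ a b c : ℤ) (hg : g₁ < 0) : W3 j n g₁ g₂ a b c = 0 := by
  rw [W3, Nat.card_eq_zero]
  left
  constructor
  rintro ⟨p, h⟩
  exact absurd (domP_nonneg h.2.2.2.1) (by omega)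

lemma W3_g2neg (j n : ℕ) (g₁ g₂ a b c : ℤ) (hg : g₂ < 0) : W3 j n g₁ g₂ a b c = 0 := by
  rw [W3, Nat.card_eq_zero]
  left
  constructor
  rintro ⟨p, h⟩
  exact absurd (domP_nonneg h.2.2.2.2.1) (by omega)

lemma ups_zero (P : Fin 0 → Bool) : ups 0 P = 0 := by simp [ups]

lemma domP_zero_iff (g : ℤ) (u v : Fin 0 → Bool) : domP 0 g u v ↔ 0 ≤ g := by
  constructor
  · exact domP_nonneg
  · intro hg t
    rw [countN_stab 0 u t (Nat.zero_le t), countN_stab 0 v t (Nat.zero_le t),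
      ups_zero, ups_zero]
    simpa using hg

lemma W2_zero (g b c : ℤ) : W2 0 g b c = if b = 0 ∧ c = 0 ∧ 0 ≤ g then 1 else 0 := by
  rw [W2]
  split_ifs with h
  · obtain ⟨hb, hc, hg⟩ := h
    have : Nonempty {p : (Fin 0 → Bool) × (Fin 0 → Bool) //
        (ups 0 p.1 : ℤ) = b ∧ (ups 0 p.2 : ℤ) = c ∧ domP 0 g p.1 p.2} :=
      ⟨⟨(Fin.elim0, Fin.elim0), by
        refine ⟨?_, ?_, (domP_zero_iff g _ _).mpr hg⟩ <;> simp [ups_zero, hb, hc]⟩⟩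
    haveI : Subsingleton {p : (Fin 0 → Bool) × (Fin 0 → Bool) //
        (ups 0 p.1 : ℤ) = b ∧ (ups 0 p.2 : ℤ) = c ∧ domP 0 g p.1 p.2} := by
      constructor
      rintro ⟨⟨u1, v1⟩, _⟩ ⟨⟨u2, v2⟩, _⟩
      ext <;> simp [Subsingleton.elim u1 u2, Subsingleton.elim v1 v2]
    exact Nat.card_unique
  · rw [Nat.card_eq_zero]
    left
    constructor
    rintro ⟨⟨u, v⟩, hu, hv, hd⟩
    rw [ups_zero] at hu hv
    exact h ⟨by omega, by omega, (domP_zero_iff g u v).mp hd⟩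

/-! ### Forced top walk at the base length -/

def u0 (n : ℕ) : Fin n → Bool := fun i => decide ((i : ℕ) = 0)

lemma tailC_iff_u0 {j : ℕ} (hj : 2 ≤ j) (u : Fin (j-1) → Bool) :
    tailC j (j-1) u ↔ u = u0 (j-1) := by
  constructor
  · rintro ⟨h1, h2⟩
    funext i
    by_cases hi : (i : ℕ) = 0
    · rw [h1 i (by omega), u0]
      simp [hi]
    · rw [h2 i (by omega), u0]
      simp [hi]
  · rintro rfl
    constructor
    · intro i hi
      have : (i : ℕ) = 0 := by omega
      simp [u0, this]
    · intro i hi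
      have : ¬ ((i : ℕ) = 0) := by omega
      simp [u0, this]

lemma ups_u0 {j : ℕ} (hj : 2 ≤ j) : ups (j-1) (u0 (j-1)) = 1 := by
  rw [ups]
  have : (Finset.univ.filter fun i : Fin (j-1) => u0 (j-1) i = true)
      = {⟨0, by omega⟩} := by
    ext i
    simp [u0, Fin.ext_iff]
  rw [this, Finset.card_singleton]

lemma countN_u0 {j : ℕ} (hj : 2 ≤ j) (t : ℕ) :
    countN (j-1) (u0 (j-1)) t = if 1 ≤ t then 1 else 0 := by
  rw [countN]
  split_ifs with ht
  · have : (Finset.univ.filter fun i : Fin (j-1) => (i : ℕ) < t ∧ u0 (j-1) i = true)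
        = {⟨0, by omega⟩} := by
      ext i
      simp [u0, Fin.ext_iff]
      omega
    rw [this, Finset.card_singleton]
  · have : (Finset.univ.filter fun i : Fin (j-1) => (i : ℕ) < t ∧ u0 (j-1) i = true)
        = ∅ := by
      ext i
      simp [u0]
      omega
    rw [this, Finset.card_empty]

lemma domP_u0_iff {j : ℕ} (hj : 2 ≤ j) (g : ℤ) (v : Fin (j-1) → Bool) :
    domP (j-1) g (u0 (j-1)) v ↔ 0 ≤ g ∧ (ups (j-1) v : ℤ) ≤ g + 1 := by
  constructor
  · intro h
    refine ⟨domP_nonneg h, ?_⟩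
    have := h (j-1)
    rw [countN_stab _ _ _ le_rfl, countN_u0 hj, if_pos (by omega)] at this
    push_cast at this ⊢
    omega
  · rintro ⟨hg, hb⟩ t
    have h1 := countN_le_ups (j-1) v t
    rw [countN_u0 hj]
    cases t with
    | zero => rw [countN_zero]; simp; omega
    | succ t =>
      rw [if_pos (by omega)]
      push_cast
      omega

lemma W3_base (j : ℕ) (hj : 2 ≤ j) (g₁ g₂ a b c : ℤ) :
    W3 j (j-1) g₁ g₂ a b c =
      if a = 1 ∧ 0 ≤ g₁ ∧ b ≤ g₁ + 1 then W2 (j-1) g₂ b c else 0 := by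
  split_ifs with h
  · obtain ⟨ha, hg, hb⟩ := h
    rw [W3, W2]
    apply Nat.card_congr
    refine ⟨fun P => ⟨(P.1.2.1, P.1.2.2), P.2.2.1, P.2.2.2.1, P.2.2.2.2.2.1⟩,
      fun p => ⟨(u0 (j-1), p.1.1, p.1.2), ?_, p.2.1, p.2.2.1, ?_, p.2.2.2,
        (tailC_iff_u0 hj _).mpr rfl⟩,
      ?_, fun p => rfl⟩
    · rw [ups_u0 hj, ha]; norm_num
    · exact (domP_u0_iff hj g₁ _).mpr ⟨hg, by rw [p.2.1]; exact hb⟩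
    · rintro ⟨⟨u, v, w⟩, hP⟩
      have hu : u = u0 (j-1) := (tailC_iff_u0 hj u).mp hP.2.2.2.2.2
      apply Subtype.ext
      simp only
      rw [hu]
  · rw [W3, Nat.card_eq_zero]
    left
    constructor
    rintro ⟨⟨u, v, w⟩, hP⟩
    have hu : u = u0 (j-1) := (tailC_iff_u0 hj u).mp hP.2.2.2.2.2
    subst hu
    have ha : a = 1 := by rw [← hP.1, ups_u0 hj]; norm_num
    have hd := (domP_u0_iff hj g₁ v).mp hP.2.2.2.1
    exact h ⟨ha, hd.1, by rw [← hP.2.1]; exact hd.2⟩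

/-! ### Step recursions by peeling the first step -/

lemma card_sigma_fin {β : Type*} [Fintype β] (γ : β → Type*) [∀ b, Finite (γ b)] :
    Nat.card ((b : β) × γ b) = ∑ b, Nat.card (γ b) := by
  letI : ∀ b, Fintype (γ b) := fun _ => Fintype.ofFinite _
  simp only [Nat.card_eq_fintype_card]
  exact Fintype.card_sigma

def e3 {α β : Type*} : ((α×β)×(α×β)×(α×β)) ≃ ((α×α×α)×(β×β×β)) where
  toFun x := ((x.1.1, x.2.1.1, x.2.2.1), (x.1.2, x.2.1.2, x.2.2.2))
  invFun y := ((y.1.1, y.2.1), (y.1.2.1, y.2.2.1), (y.1.2.2, y.2.2.2))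
  left_inv _ := rfl
  right_inv _ := rfl

def e2 {α β : Type*} : ((α×β)×(α×β)) ≃ ((α×α)×(β×β)) where
  toFun x := ((x.1.1, x.2.1), (x.1.2, x.2.2))
  invFun y := ((y.1.1, y.2.1), (y.1.2, y.2.2))
  left_inv _ := rfl
  right_inv _ := rfl

lemma ups_cons_iff (n : ℕ) (e : Bool) (P : Fin n → Bool) (x : ℤ) :
    ((ups (n+1) (Fin.cons e P) : ℤ) = x) ↔ ((ups n P : ℤ) = x - I e) := by
  rw [ups_cons]; cases e <;> simp [I] <;> push_cast <;> omega

lemma W2_succ (n : ℕ) (g b c : ℤ) (hg : 0 ≤ g) :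
    W2 (n+1) g b c =
      ∑ ε : Bool × Bool, W2 n (g + I ε.1 - I ε.2) (b - I ε.1) (c - I ε.2) := by
  classical
  set X := Fin n → Bool
  let ce : Bool × X ≃ (Fin (n+1) → Bool) := Fin.consEquiv (fun _ => Bool)
  let E : (Bool×X)×(Bool×X) ≃ (Fin (n+1) → Bool) × (Fin (n+1) → Bool) :=
    ce.prodCongr ce
  let Q : (Fin (n+1) → Bool) × (Fin (n+1) → Bool) → Prop := fun p =>
    (ups (n+1) p.1 : ℤ) = b ∧ (ups (n+1) p.2 : ℤ) = c ∧ domP (n+1) g p.1 p.2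
  have step1 : W2 (n+1) g b c = Nat.card {x : (Bool×X)×(Bool×X) // Q (E x)} :=
    Nat.card_congr (Equiv.subtypeEquiv E (fun _ => Iff.rfl)).symm
  have step2 : Nat.card {x : (Bool×X)×(Bool×X) // Q (E x)}
      = Nat.card {y : (Bool×Bool)×(X×X) // Q (E (e2.symm y))} :=
    Nat.card_congr (Equiv.subtypeEquiv e2 (fun _ => Iff.rfl))
  have step3 : Nat.card {y : (Bool×Bool)×(X×X) // Q (E (e2.symm y))}
      = Nat.card ((ε : Bool×Bool) × {q : X×X // Q (E (e2.symm (ε, q)))}) :=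
    Nat.card_congr (Equiv.subtypeProdEquivSigmaSubtype
      (fun (ε : Bool×Bool) (q : X×X) => Q (E (e2.symm (ε, q)))))
  rw [step1, step2, step3, card_sigma_fin]
  apply Finset.sum_congr rfl
  intro ε _
  apply Nat.card_congr
  apply Equiv.subtypeEquivRight
  intro q
  show ((ups (n+1) (Fin.cons ε.1 q.1) : ℤ) = b ∧ (ups (n+1) (Fin.cons ε.2 q.2) : ℤ) = c ∧
      domP (n+1) g (Fin.cons ε.1 q.1) (Fin.cons ε.2 q.2)) ↔ _
  rw [ups_cons_iff, ups_cons_iff, domP_cons]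
  show _ ↔ ((ups n q.1 : ℤ) = b - I ε.1 ∧ (ups n q.2 : ℤ) = c - I ε.2 ∧
      domP n (g + I ε.1 - I ε.2) q.1 q.2)
  unfold I
  tauto

lemma W3_succ (j n : ℕ) (hj : 2 ≤ j) (hn : j - 1 ≤ n) (g₁ g₂ a b c : ℤ)
    (h1 : 0 ≤ g₁) (h2 : 0 ≤ g₂) :
    W3 j (n+1) g₁ g₂ a b c =
      ∑ ε : Bool × Bool × Bool,
        W3 j n (g₁ + I ε.1 - I ε.2.1) (g₂ + I ε.2.1 - I ε.2.2)
          (a - I ε.1) (b - I ε.2.1) (c - I ε.2.2) := by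
  classical
  set X := Fin n → Bool
  let ce : Bool × X ≃ (Fin (n+1) → Bool) := Fin.consEquiv (fun _ => Bool)
  let E : (Bool×X)×(Bool×X)×(Bool×X) ≃
      (Fin (n+1) → Bool) × (Fin (n+1) → Bool) × (Fin (n+1) → Bool) :=
    ce.prodCongr (ce.prodCongr ce)
  let Q : (Fin (n+1) → Bool) × (Fin (n+1) → Bool) × (Fin (n+1) → Bool) → Prop := fun P =>
    (ups (n+1) P.1 : ℤ) = a ∧ (ups (n+1) P.2.1 : ℤ) = b ∧ (ups (n+1) P.2.2 : ℤ) = c ∧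
    domP (n+1) g₁ P.1 P.2.1 ∧ domP (n+1) g₂ P.2.1 P.2.2 ∧ tailC j (n+1) P.1
  have step1 : W3 j (n+1) g₁ g₂ a b c = Nat.card {x : (Bool×X)×(Bool×X)×(Bool×X) // Q (E x)} :=
    Nat.card_congr (Equiv.subtypeEquiv E (fun _ => Iff.rfl)).symm
  have step2 : Nat.card {x : (Bool×X)×(Bool×X)×(Bool×X) // Q (E x)}
      = Nat.card {y : (Bool×Bool×Bool)×(X×X×X) // Q (E (e3.symm y))} :=
    Nat.card_congr (Equiv.subtypeEquiv e3 (fun _ => Iff.rfl))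
  have step3 : Nat.card {y : (Bool×Bool×Bool)×(X×X×X) // Q (E (e3.symm y))}
      = Nat.card ((ε : Bool×Bool×Bool) × {q : X×X×X // Q (E (e3.symm (ε, q)))}) :=
    Nat.card_congr (Equiv.subtypeProdEquivSigmaSubtype
      (fun (ε : Bool×Bool×Bool) (q : X×X×X) => Q (E (e3.symm (ε, q)))))
  rw [step1, step2, step3, card_sigma_fin]
  apply Finset.sum_congr rfl
  intro ε _
  apply Nat.card_congr
  apply Equiv.subtypeEquivRight
  intro q
  show ((ups (n+1) (Fin.cons ε.1 q.1) : ℤ) = a ∧ (ups (n+1) (Fin.cons ε.2.1 q.2.1) : ℤ) = b ∧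
      (ups (n+1) (Fin.cons ε.2.2 q.2.2) : ℤ) = c ∧
      domP (n+1) g₁ (Fin.cons ε.1 q.1) (Fin.cons ε.2.1 q.2.1) ∧
      domP (n+1) g₂ (Fin.cons ε.2.1 q.2.1) (Fin.cons ε.2.2 q.2.2) ∧
      tailC j (n+1) (Fin.cons ε.1 q.1)) ↔ _
  rw [ups_cons_iff, ups_cons_iff, ups_cons_iff, domP_cons, domP_cons,
    tailC_cons hj hn]
  show _ ↔ ((ups n q.1 : ℤ) = a - I ε.1 ∧ (ups n q.2.1 : ℤ) = b - I ε.2.1 ∧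
      (ups n q.2.2 : ℤ) = c - I ε.2.2 ∧
      domP n (g₁ + I ε.1 - I ε.2.1) q.1 q.2.1 ∧
      domP n (g₂ + I ε.2.1 - I ε.2.2) q.2.1 q.2.2 ∧ tailC j n q.1)
  unfold I
  tauto

/-! ### Determinants of truncated binomials -/

def binZ (N : ℕ) (r : ℤ) : ℤ := if 0 ≤ r then (N.choose r.toNat : ℤ) else 0

lemma binZ_neg {N : ℕ} {r : ℤ} (h : r < 0) : binZ N r = 0 := by
  simp [binZ, not_le.mpr h]

lemma binZ_zero_left (r : ℤ) : binZ 0 r = if r = 0 then 1 else 0 := by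
  rcases lt_trichotomy r 0 with h | h | h
  · simp [binZ_neg h, h.ne]
  · simp [h, binZ]
  · have h1 : ¬ (r = 0) := h.ne'
    have h2 : 0 < r.toNat := by omega
    simp [binZ, h.le, h1, Nat.choose_eq_zero_of_lt h2]

lemma binZ_pascal (N : ℕ) (r : ℤ) : binZ (N + 1) r = binZ N r + binZ N (r - 1) := by
  rcases lt_trichotomy r 0 with h | h | h
  · rw [binZ_neg h, binZ_neg h, binZ_neg (by omega)]; ring
  · subst h
    rw [binZ_neg (by norm_num : (0:ℤ) - 1 < 0)]
    simp [binZ]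
  · obtain ⟨s, rfl⟩ : ∃ s : ℕ, r = (s : ℤ) + 1 := ⟨(r - 1).toNat, by omega⟩
    have h1 : ((s:ℤ) + 1).toNat = s + 1 := by omega
    have h2 : ((s:ℤ) + 1 - 1).toNat = s := by omega
    simp only [binZ, h1, h2, if_pos (by omega : (0:ℤ) ≤ (s:ℤ)+1),
      if_pos (by omega : (0:ℤ) ≤ (s:ℤ)+1-1), Nat.choose_succ_succ]
    push_cast; ring

lemma binZ_coe (N r : ℕ) : binZ N (r : ℤ) = (N.choose r : ℤ) := by
  simp [binZ]

def D2 (n : ℕ) (b c g : ℤ) : ℤ :=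
  binZ n b * binZ n c - binZ n (c - g - 1) * binZ n (b + g + 1)

def D3 (m n : ℕ) (a b c g₁ g₂ : ℤ) : ℤ :=
  binZ m (a-1) * (binZ n b * binZ n c - binZ n (c-g₂-1) * binZ n (b+g₂+1))
  - binZ n (b-g₁-1) * (binZ m (a+g₁) * binZ n c - binZ n (c-g₂-1) * binZ m (a+g₁+g₂+1))
  + binZ n (c-g₁-g₂-2) * (binZ m (a+g₁) * binZ n (b+g₂+1) - binZ n b * binZ m (a+g₁+g₂+1))

lemma D2_pascal (n : ℕ) (b c g : ℤ) :
    D2 (n+1) b c g = ∑ ε : Bool × Bool, D2 n (b - I ε.1) (c - I ε.2) (g + I ε.1 - I ε.2) := by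
  rw [Fintype.sum_prod_type, Fintype.sum_bool, Fintype.sum_bool, Fintype.sum_bool]
  simp only [D2, binZ_pascal, I, Bool.false_eq_true, if_true, if_false]
  ring_nf

lemma D2_gneg (n : ℕ) (b c : ℤ) : D2 n b c (-1) = 0 := by
  simp only [D2]
  ring_nf

lemma D3_pascal (m n : ℕ) (a b c g₁ g₂ : ℤ) :
    D3 (m+1) (n+1) a b c g₁ g₂ =
      ∑ ε : Bool × Bool × Bool,
        D3 m n (a - I ε.1) (b - I ε.2.1) (c - I ε.2.2)
          (g₁ + I ε.1 - I ε.2.1) (g₂ + I ε.2.1 - I ε.2.2) := by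
  rw [Fintype.sum_prod_type, Fintype.sum_bool]
  rw [Fintype.sum_prod_type, Fintype.sum_prod_type, Fintype.sum_bool, Fintype.sum_bool,
    Fintype.sum_bool, Fintype.sum_bool, Fintype.sum_bool, Fintype.sum_bool]
  simp only [D3, binZ_pascal, I, Bool.false_eq_true, if_true, if_false]
  ring_nf

lemma D3_g1neg (m n : ℕ) (a b c g₂ : ℤ) : D3 m n a b c (-1) g₂ = 0 := by
  simp only [D3]; ring_nf

lemma D3_g2neg (m n : ℕ) (a b c g₁ : ℤ) : D3 m n a b c g₁ (-1) = 0 := by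
  simp only [D3]; ring_nf

lemma D2_base (b g : ℤ) (hg : 0 ≤ g) : D2 0 b (b+g) g = if b = 0 ∧ g = 0 then 1 else 0 := by
  simp only [D2, binZ_zero_left]
  split_ifs <;> omega

lemma D3_base (n : ℕ) (a g₁ g₂ : ℤ) (h1 : 0 ≤ g₁) (h2 : 0 ≤ g₂) :
    D3 0 n a (a+g₁) (a+g₁+g₂) g₁ g₂ = if a = 1 then D2 n (a+g₁) (a+g₁+g₂) g₂ else 0 := by
  have e1 : binZ 0 (a-1) = if a = 1 then 1 else 0 := by
    rw [binZ_zero_left]; rcases eq_or_ne a 1 with rfl | h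
    · norm_num
    · rw [if_neg (by omega), if_neg h]
  have e2 : binZ 0 (a+g₁) = if a = -g₁ then 1 else 0 := by
    rw [binZ_zero_left]; rcases eq_or_ne a (-g₁) with rfl | h
    · rw [if_pos (by ring), if_pos rfl]
    · rw [if_neg (by omega), if_neg h]
  have e3 : binZ 0 (a+g₁+g₂+1) = if a = -g₁-g₂-1 then 1 else 0 := by
    rw [binZ_zero_left]; rcases eq_or_ne a (-g₁-g₂-1) with rfl | h
    · rw [if_pos (by ring), if_pos rfl]
    · rw [if_neg (by omega), if_neg h]
  simp only [D3, e1, e2, e3]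
  rcases eq_or_ne a 1 with rfl | ha
  · rw [if_pos rfl, if_pos rfl, if_neg (by omega), if_neg (by omega)]
    simp only [D2]
    ring_nf
  · rw [if_neg ha, if_neg ha]
    rcases eq_or_ne a (-g₁) with rfl | ha2
    · rw [if_pos rfl, if_neg (by omega)]
      rw [binZ_neg (show -g₁ + g₁ - g₁ - 1 < 0 by omega),
        binZ_neg (show -g₁ + g₁ + g₂ - g₁ - g₂ - 2 < 0 by omega)]
      ring
    · rcases eq_or_ne a (-g₁-g₂-1) with rfl | ha3
      · rw [if_neg ha2, if_pos rfl]
        rw [binZ_neg (show -g₁-g₂-1 + g₁ - g₁ - 1 < 0 by omega),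
          binZ_neg (show -g₁-g₂-1 + g₁ + g₂ - g₁ - g₂ - 2 < 0 by omega)]
        ring
      · rw [if_neg ha2, if_neg ha3]
        ring

/-! ### Closed forms -/

lemma W2_eq_D2 (n : ℕ) : ∀ (b g : ℤ), 0 ≤ g → (W2 n g b (b+g) : ℤ) = D2 n b (b+g) g := by
  induction n with
  | zero =>
    intro b g hg
    rw [W2_zero, D2_base b g hg]
    by_cases h : b = 0 ∧ g = 0
    · rw [if_pos h, if_pos ⟨h.1, by omega, hg⟩]
      norm_num
    · rw [if_neg h, if_neg (by intro hh; exact h ⟨hh.1, by omega⟩)]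
      norm_num
  | succ n ih =>
    intro b g hg
    rw [W2_succ n g b (b+g) hg, D2_pascal]
    push_cast
    apply Finset.sum_congr rfl
    intro ε _
    rcases lt_or_ge (g + I ε.1 - I ε.2) 0 with hneg | hpos
    · have hI1 : (0:ℤ) ≤ I ε.1 := by cases ε.1 <;> simp [I]
      have hI2 : I ε.2 ≤ 1 := by cases ε.2 <;> simp [I]
      have : g + I ε.1 - I ε.2 = -1 := by omega
      rw [W2_gneg _ _ _ _ (by omega), this, D2_gneg]
      norm_num
    · have hc : b + g - I ε.2 = (b - I ε.1) + (g + I ε.1 - I ε.2) := by ring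
      rw [hc]
      exact ih (b - I ε.1) (g + I ε.1 - I ε.2) hpos

lemma W3_eq_D3 (j : ℕ) (hj : 2 ≤ j) (m : ℕ) :
    ∀ (a g₁ g₂ : ℤ), 0 ≤ g₁ → 0 ≤ g₂ →
      (W3 j (m + (j-1)) g₁ g₂ a (a+g₁) (a+g₁+g₂) : ℤ)
        = D3 m (m + (j-1)) a (a+g₁) (a+g₁+g₂) g₁ g₂ := by
  induction m with
  | zero =>
    intro a g₁ g₂ h1 h2
    rw [Nat.zero_add, W3_base j hj, D3_base _ a g₁ g₂ h1 h2]
    rcases eq_or_ne a 1 with rfl | ha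
    · rw [if_pos ⟨rfl, h1, by omega⟩, if_pos rfl]
      exact W2_eq_D2 (j-1) (1+g₁) g₂ h2
    · rw [if_neg (fun hh => ha hh.1), if_neg ha]
      norm_num
  | succ m ih =>
    intro a g₁ g₂ h1 h2
    have hn : (m+1) + (j-1) = (m + (j-1)) + 1 := by omega
    rw [hn, W3_succ j (m + (j-1)) hj (by omega) g₁ g₂ a (a+g₁) (a+g₁+g₂) h1 h2, D3_pascal]
    push_cast
    apply Finset.sum_congr rfl
    intro ε _
    have hI1 : (0:ℤ) ≤ I ε.1 ∧ I ε.1 ≤ 1 := by cases ε.1 <;> simp [I]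
    have hI2 : (0:ℤ) ≤ I ε.2.1 ∧ I ε.2.1 ≤ 1 := by cases ε.2.1 <;> simp [I]
    have hI3 : (0:ℤ) ≤ I ε.2.2 ∧ I ε.2.2 ≤ 1 := by cases ε.2.2 <;> simp [I]
    rcases lt_or_ge (g₁ + I ε.1 - I ε.2.1) 0 with hneg | hpos1
    · have h1' : g₁ + I ε.1 - I ε.2.1 = -1 := by omega
      rw [W3_g1neg _ _ _ _ _ _ _ (by omega), h1', D3_g1neg]
      norm_num
    · rcases lt_or_ge (g₂ + I ε.2.1 - I ε.2.2) 0 with hneg2 | hpos2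
      · have h2' : g₂ + I ε.2.1 - I ε.2.2 = -1 := by omega
        rw [W3_g2neg _ _ _ _ _ _ _ (by omega), h2', D3_g2neg]
        norm_num
      · have hb : a + g₁ - I ε.2.1 = (a - I ε.1) + (g₁ + I ε.1 - I ε.2.1) := by ring
        have hc : a + g₁ + g₂ - I ε.2.2
            = ((a - I ε.1) + (g₁ + I ε.1 - I ε.2.1)) + (g₂ + I ε.2.1 - I ε.2.2) := by ring
        rw [hb, hc]
        exact ih (a - I ε.1) (g₁ + I ε.1 - I ε.2.1) (g₂ + I ε.2.1 - I ε.2.2) hpos1 hpos2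


/-! ### Rational evaluation -/

lemma binZ_rel (N : ℕ) (x : ℤ) :
    ((x : ℚ) + 1) * ((binZ N (x+1) : ℤ) : ℚ) = ((N : ℚ) - (x : ℚ)) * ((binZ N x : ℤ) : ℚ) := by
  rcases lt_trichotomy x (-1) with h | h | h
  · rw [binZ_neg (by omega : x + 1 < 0), binZ_neg (by omega : x < 0)]
    norm_num
  · subst h
    rw [binZ_neg (by omega : (-1:ℤ) < 0)]
    norm_num
  · obtain ⟨y, rfl⟩ : ∃ y : ℕ, x = (y : ℤ) := ⟨x.toNat, by omega⟩
    rw [show (y:ℤ) + 1 = ((y+1 : ℕ) : ℤ) from by push_cast; ring, binZ_coe, binZ_coe]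
    rcases le_or_gt (y+1) N with hy | hy
    · have hnat := Nat.choose_succ_right_eq N y
      have hcast : ((N.choose (y+1) * (y+1) : ℕ) : ℚ) = ((N.choose y * (N - y) : ℕ) : ℚ) := by
        exact_mod_cast congrArg (Nat.cast : ℕ → ℚ) hnat
      push_cast [Nat.cast_sub (by omega : y ≤ N)] at hcast
      push_cast
      linarith
    · rcases le_or_gt y N with hy2 | hy2
      · have : N = y := by omega
        subst this
        rw [Nat.choose_eq_zero_of_lt (by omega), Nat.choose_self]
        push_cast
        ring
      · rw [Nat.choose_eq_zero_of_lt (by omega), Nat.choose_eq_zero_of_lt (by omega)]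
        push_cast
        ring

lemma det_eval (k s t A0 A1 A2 B0 B1 B2 Bm : ℚ)
    (hk : 0 ≤ k) (hs : 0 ≤ s) (ht : 0 ≤ t)
    (hA1 : (s+1)*A1 = k*A0) (hA2 : (s+2)*A2 = (k-1)*A1)
    (hB1 : (s+1)*B1 = (k+t+1)*B0) (hB2 : (s+2)*B2 = (k+t)*B1)
    (hBm : (k+t+2)*Bm = s*B0) :
    A0*(B1*B1 - B0*B2) - B0*(A1*B1 - B0*A2) + Bm*(A1*B2 - B1*A2)
      = A0*B0*B0*((t+1)*(t+2)*(k+s+t+2)) / ((k+t+2)*(s+1)^2*(s+2)) := by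
  have h1 : s + 1 ≠ 0 := by positivity
  have h2 : s + 2 ≠ 0 := by positivity
  have h3 : k + t + 2 ≠ 0 := by positivity
  have e1 : A1 = k*A0/(s+1) := by rw [eq_div_iff h1]; linarith
  have e2 : A2 = (k-1)*(k*A0/(s+1))/(s+2) := by rw [eq_div_iff h2, ← e1]; linarith
  have e3 : B1 = (k+t+1)*B0/(s+1) := by rw [eq_div_iff h1]; linarith
  have e4 : B2 = (k+t)*((k+t+1)*B0/(s+1))/(s+2) := by rw [eq_div_iff h2, ← e3]; linarith
  have e5 : Bm = s*B0/(k+t+2) := by rw [eq_div_iff h3]; linarith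
  rw [e1, e2, e3, e4, e5]
  field_simp
  ring

lemma final_eval (k s t : ℕ) :
    ((D3 (k+s) (k+s+t+1) ((s:ℤ)+1) ((s:ℤ)+1) ((s:ℤ)+1) 0 0 : ℤ) : ℚ)
      = (((t:ℚ)+2) * ((t:ℚ)+1) * (k+s).factorial * (k+s+t+2).factorial * (k+s+t+1).factorial) /
        ((k.factorial : ℚ) * (k+t+2).factorial * (k+t+1).factorial *
         (s+2).factorial * (s+1).factorial * s.factorial) := by
  have harg1 : (s:ℤ)+1-1 = (s:ℤ) := by ring
  have harg2 : (s:ℤ)+1-0-1 = (s:ℤ) := by ring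
  have harg3 : (s:ℤ)+1-0-0-2 = (s:ℤ)-1 := by ring
  have harg4 : (s:ℤ)+1+0 = (s:ℤ)+1 := by ring
  have harg5 : (s:ℤ)+1+0+0+1 = (s:ℤ)+2 := by ring
  have harg6 : (s:ℤ)+1+0+1 = (s:ℤ)+2 := by ring
  rw [D3, harg1, harg2, harg3, harg4]
  rw [show (s:ℤ)+1+0+1 = (s:ℤ)+2 from by ring]
  rw [show (s:ℤ)+1+1 = (s:ℤ)+2 from by ring]
  have r1 := binZ_rel (k+s) (s:ℤ)
  have r2 := binZ_rel (k+s) ((s:ℤ)+1)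
  have r3 := binZ_rel (k+s+t+1) (s:ℤ)
  have r4 := binZ_rel (k+s+t+1) ((s:ℤ)+1)
  have r5 := binZ_rel (k+s+t+1) ((s:ℤ)-1)
  rw [show (s:ℤ)+1+1 = (s:ℤ)+2 from by ring] at r2 r4
  rw [show (s:ℤ)-1+1 = (s:ℤ) from by ring] at r5
  push_cast at r1 r2 r3 r4 r5 ⊢
  have hdet := det_eval (k:ℚ) (s:ℚ) (t:ℚ)
    ((binZ (k+s) (s:ℤ) : ℤ) : ℚ) ((binZ (k+s) ((s:ℤ)+1) : ℤ) : ℚ)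
    ((binZ (k+s) ((s:ℤ)+2) : ℤ) : ℚ)
    ((binZ (k+s+t+1) (s:ℤ) : ℤ) : ℚ) ((binZ (k+s+t+1) ((s:ℤ)+1) : ℤ) : ℚ)
    ((binZ (k+s+t+1) ((s:ℤ)+2) : ℤ) : ℚ)
    ((binZ (k+s+t+1) ((s:ℤ)-1) : ℤ) : ℚ)
    (by positivity) (by positivity) (by positivity)
    (by linarith) (by linarith) (by linarith) (by linarith) (by linarith)
  rw [hdet]
  have hA0 : ((binZ (k+s) (s:ℤ) : ℤ) : ℚ) = ((k+s).factorial : ℚ) / (s.factorial * k.factorial) := by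
    rw [binZ_coe, Int.cast_natCast, Nat.cast_choose ℚ (by omega : s ≤ k+s),
      show k + s - s = k from by omega]
  have hB0 : ((binZ (k+s+t+1) (s:ℤ) : ℤ) : ℚ)
      = ((k+s+t+1).factorial : ℚ) / (s.factorial * (k+t+1).factorial) := by
    rw [binZ_coe, Int.cast_natCast, Nat.cast_choose ℚ (by omega : s ≤ k+s+t+1),
      show k + s + t + 1 - s = k+t+1 from by omega]
  rw [hA0, hB0]
  have f1 : ((s+2).factorial : ℚ) = ((s:ℚ)+2)*(((s:ℚ)+1)*s.factorial) := by
    rw [show s+2 = (s+1)+1 from rfl, Nat.factorial_succ, Nat.factorial_succ]; push_cast; ring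
  have f2 : ((s+1).factorial : ℚ) = ((s:ℚ)+1)*s.factorial := by
    rw [Nat.factorial_succ]; push_cast; ring
  have f3 : ((k+t+2).factorial : ℚ) = ((k:ℚ)+(t:ℚ)+2)*(k+t+1).factorial := by
    rw [show k+t+2 = (k+t+1)+1 from rfl, Nat.factorial_succ]; push_cast; ring
  have f4 : ((k+s+t+2).factorial : ℚ) = ((k:ℚ)+(s:ℚ)+(t:ℚ)+2)*(k+s+t+1).factorial := by
    rw [show k+s+t+2 = (k+s+t+1)+1 from rfl, Nat.factorial_succ]; push_cast; ring
  rw [f1, f2, f3, f4]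
  have n1 : (s.factorial : ℚ) ≠ 0 := by positivity
  have n2 : (k.factorial : ℚ) ≠ 0 := by positivity
  have n3 : ((k+t+1).factorial : ℚ) ≠ 0 := by positivity
  have n4 : ((k+s+t+1).factorial : ℚ) ≠ 0 := by positivity
  have n5 : (s:ℚ)+1 ≠ 0 := by positivity
  have n6 : (s:ℚ)+2 ≠ 0 := by positivity
  have n7 : (k:ℚ)+(t:ℚ)+2 ≠ 0 := by positivity
  field_simp

end BPX

theorem bipolar_maps_as_noncrossing_triples_of_walks (k l j : ℕ) (hl : 2 ≤ l) (hj : 2 ≤ j) :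
    (Nat.card
      {P : (Fin ((k + j - 2) + (l - 1)) → Bool) × (Fin ((k + j - 2) + (l - 1)) → Bool) ×
            (Fin ((k + j - 2) + (l - 1)) → Bool) //
        -- all three walks end at (k+j-2, l-1), i.e. have exactly l-1 N-steps
        (Finset.univ.filter fun i => P.1 i = true).card = l - 1 ∧
        (Finset.univ.filter fun i => P.2.1 i = true).card = l - 1 ∧
        (Finset.univ.filter fun i => P.2.2 i = true).card = l - 1 ∧
        -- (i) noncrossing: P₁ weakly above P₂ weakly above P₃
        (∀ t : ℕ, countN ((k + j - 2) + (l - 1)) P.2.1 t ≤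
          countN ((k + j - 2) + (l - 1)) P.1 t) ∧
        (∀ t : ℕ, countN ((k + j - 2) + (l - 1)) P.2.2 t ≤
          countN ((k + j - 2) + (l - 1)) P.2.1 t) ∧
        -- (ii) the upper walk P₁ ends with an N-step followed by j-2 E-steps
        (∀ i : Fin ((k + j - 2) + (l - 1)),
          (i : ℕ) = (k + j - 2) + (l - 1) - (j - 1) → P.1 i = true) ∧
        (∀ i : Fin ((k + j - 2) + (l - 1)),
          (k + j - 2) + (l - 1) - (j - 2) ≤ (i : ℕ) → P.1 i = false)} : ℚ)
    = (j * (j - 1) * Nat.factorial (k + l - 2) * Nat.factorial (k + l + j - 2) *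
        Nat.factorial (k + l + j - 3) : ℚ) /
      (Nat.factorial k * Nat.factorial (k + j) * Nat.factorial (k + j - 1) *
        Nat.factorial l * Nat.factorial (l - 1) * Nat.factorial (l - 2) : ℚ) := by
  classical
  obtain ⟨s, rfl⟩ : ∃ s, l = s + 2 := ⟨l - 2, by omega⟩
  obtain ⟨t, rfl⟩ : ∃ t, j = t + 2 := ⟨j - 2, by omega⟩
  trans ((BPX.W3 (t+2) ((k + (t+2) - 2) + ((s+2) - 1)) 0 0 ((s:ℤ)+1) ((s:ℤ)+1) ((s:ℤ)+1) : ℕ) : ℚ)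
  · rw [Nat.cast_inj]
    rw [BPX.W3]
    apply Nat.card_congr
    apply Equiv.subtypeEquivRight
    intro P
    simp only [BPX.ups, BPX.domP, BPX.tailC]
    constructor
    · rintro ⟨h1, h2, h3, h4, h5, h6, h7⟩
      refine ⟨by omega, by omega, by omega, fun u => ?_, fun u => ?_, h6, h7⟩
      · have := h4 u; omega
      · have := h5 u; omega
    · rintro ⟨h1, h2, h3, h4, h5, h6, h7⟩
      refine ⟨by omega, by omega, by omega, fun u => ?_, fun u => ?_, h6, h7⟩
      · have := h4 u; omega
      · have := h5 u; omega
  · have e0 : (k + (t+2) - 2) + ((s+2) - 1) = (k+s) + ((t+2)-1) := by omega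
    rw [e0]
    have hW := BPX.W3_eq_D3 (t+2) (by omega) (k+s) ((s:ℤ)+1) 0 0 le_rfl le_rfl
    rw [show ((s:ℤ)+1+0) = (s:ℤ)+1 from by ring] at hW
    rw [show ((s:ℤ)+1+0) = (s:ℤ)+1 from by ring] at hW
    have e1 : (k+s) + ((t+2)-1) = k+s+t+1 := by omega
    rw [e1] at hW ⊢
    have hQ : ((BPX.W3 (t+2) (k+s+t+1) 0 0 ((s:ℤ)+1) ((s:ℤ)+1) ((s:ℤ)+1) : ℕ) : ℚ)
        = ((BPX.D3 (k+s) (k+s+t+1) ((s:ℤ)+1) ((s:ℤ)+1) ((s:ℤ)+1) 0 0 : ℤ) : ℚ) := by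
      exact_mod_cast congrArg (Int.cast : ℤ → ℚ) hW
    rw [hQ, BPX.final_eval k s t]
    rw [show k + (s+2) - 2 = k + s from by omega,
        show k + (s+2) + (t+2) - 2 = k+s+t+2 from by omega,
        show k + (s+2) + (t+2) - 3 = k+s+t+1 from by omega,
        show k + (t+2) - 1 = k+t+1 from by omega,
        show k + (t+2) = k+t+2 from by omega,
        show (s+2) - 1 = s+1 from by omega,
        show (s+2) - 2 = s from by omega]
    push_cast
    ring
end
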